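/- arXiv:1409.0148 — 11 statements merged into one kernel-verified Lean document; each statement's English description precedes it below -/
import Mathlib

section
/- If H is an n×n matrix with entries ±1 such that H Hᵀ ≡ nI (mod m), with n odd and gcd(n,m) = 1, then n is a quadratic residue modulo m (i.e., there exists x with x² ≡ n (mod m)). -/
theorem stmt_0 (n m : ℕ) (H : Matrix (Fin n) (Fin n) ℤ)
    (hent : ∀ i j, H i j = 1 ∨ H i j = -1)
    (hmod : ∀ i j, (m : ℤ) ∣ (H * H.transpose) i j - n * (if i = j then 1 else 0))
    (hodd : Odd n) (hgcd : Nat.gcd n m = 1) :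
    ∃ x : ℤ, (m : ℤ) ∣ x ^ 2 - n := by
  -- work in ZMod m
  let f : ℤ →+* ZMod m := Int.castRingHom (ZMod m)
  have hcast : (H.map f) * (H.map f).transpose = (n : ZMod m) • (1 : Matrix (Fin n) (Fin n) (ZMod m)) := by
    ext i j
    have h := hmod i j
    have : ((((H * H.transpose) i j : ℤ) : ZMod m)) = ((n : ℤ) * (if i = j then 1 else 0) : ℤ) := by
      have := (ZMod.intCast_zmod_eq_zero_iff_dvd _ m).mpr h
      push_cast at this ⊢
      linear_combination this
    have hmm : ((H.map f) * (H.map f).transpose) i j = (((H * H.transpose) i j : ℤ) : ZMod m) := by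
      simp [Matrix.mul_apply, f, Matrix.map_apply]
    rw [hmm, this]
    by_cases hij : i = j <;> simp [hij, Matrix.smul_apply, Matrix.one_apply]
  have hdet : ((H.det : ℤ) : ZMod m) ^ 2 = (n : ZMod m) ^ n := by
    have h1 := congrArg Matrix.det hcast
    rw [Matrix.det_mul, Matrix.det_transpose, Matrix.det_smul, Matrix.det_one] at h1
    have h2 := f.map_det H
    rw [RingHom.mapMatrix_apply] at h2
    rw [← h2] at h1
    simp_all [sq, f]
  have hu : IsUnit ((n : ℕ) : ZMod m) := (ZMod.isUnit_iff_coprime n m).mpr hgcd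
  obtain ⟨v, hv⟩ := hu
  obtain ⟨k, hk⟩ := hodd
  set d : ZMod m := ((H.det : ℤ) : ZMod m)
  have key : (d * ((v⁻¹ : (ZMod m)ˣ) : ZMod m) ^ k) ^ 2 = (n : ZMod m) := by
    have h1 : d ^ 2 = (n : ZMod m) ^ (2 * k + 1) := by rw [hdet, hk]
    have h2 : ((n : ZMod m)) * (((v⁻¹ : (ZMod m)ˣ) : ZMod m)) = 1 := by
      rw [← hv, Units.mul_inv]
    calc (d * ((v⁻¹ : (ZMod m)ˣ) : ZMod m) ^ k) ^ 2
        = d ^ 2 * (((v⁻¹ : (ZMod m)ˣ) : ZMod m)) ^ (2 * k) := by ring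
      _ = (n : ZMod m) ^ (2 * k + 1) * (((v⁻¹ : (ZMod m)ˣ) : ZMod m)) ^ (2 * k) := by rw [h1]
      _ = (n : ZMod m) * ((n : ZMod m) * (((v⁻¹ : (ZMod m)ˣ) : ZMod m))) ^ (2 * k) := by ring
      _ = (n : ZMod m) := by rw [h2, one_pow, mul_one]
  obtain ⟨x, hx⟩ := ZMod.intCast_surjective (d * ((v⁻¹ : (ZMod m)ˣ) : ZMod m) ^ k)
  refine ⟨x, (ZMod.intCast_zmod_eq_zero_iff_dvd _ m).mp ?_⟩
  push_cast
  rw [hx, key, sub_self]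
end

section
/- If H₁ is an m₁-modular Hadamard matrix of size n₁ and H₂ is an m₂-modular Hadamard matrix of size n₂, then the Kronecker product H₁ ⊗ H₂ is an m-modular Hadamard matrix of size n₁n₂, where m = gcd(m₁m₂, n₁m₂, n₂m₁). -/
open Kronecker

theorem stmt_3 (n₁ n₂ m₁ m₂ : ℕ)
    (H₁ : Matrix (Fin n₁) (Fin n₁) ℤ) (H₂ : Matrix (Fin n₂) (Fin n₂) ℤ)
    (hent₁ : ∀ i j, H₁ i j = 1 ∨ H₁ i j = -1)
    (hent₂ : ∀ i j, H₂ i j = 1 ∨ H₂ i j = -1)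
    (h₁ : ∀ i j, (m₁ : ℤ) ∣ (H₁ * H₁.transpose) i j - n₁ * (if i = j then 1 else 0))
    (h₂ : ∀ i j, (m₂ : ℤ) ∣ (H₂ * H₂.transpose) i j - n₂ * (if i = j then 1 else 0)) :
    ∀ i j, ((Nat.gcd (m₁ * m₂) (Nat.gcd (n₁ * m₂) (n₂ * m₁)) : ℤ)) ∣
      ((H₁ ⊗ₖ H₂) * (H₁ ⊗ₖ H₂).transpose) i j - (n₁ * n₂ : ℕ) * (if i = j then 1 else 0) := by
  intro i j
  obtain ⟨a, ha⟩ := h₁ i.1 j.1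
  obtain ⟨b, hb⟩ := h₂ i.2 j.2
  set g : ℤ := (Nat.gcd (m₁ * m₂) (Nat.gcd (n₁ * m₂) (n₂ * m₁)) : ℤ) with hg
  have hg1 : g ∣ (m₁ : ℤ) * m₂ := by
    rw [hg]; exact_mod_cast Nat.gcd_dvd_left _ _
  have hg2 : g ∣ (n₁ : ℤ) * m₂ := by
    rw [hg]; exact_mod_cast (Nat.gcd_dvd_right _ _).trans (Nat.gcd_dvd_left _ _)
  have hg3 : g ∣ (n₂ : ℤ) * m₁ := by
    rw [hg]; exact_mod_cast (Nat.gcd_dvd_right _ _).trans (Nat.gcd_dvd_right _ _)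
  have hmul : ((H₁ ⊗ₖ H₂) * (H₁ ⊗ₖ H₂).transpose) i j
      = (H₁ * H₁.transpose) i.1 j.1 * (H₂ * H₂.transpose) i.2 j.2 := by
    rw [← Matrix.kroneckerMap_transpose, ← Matrix.mul_kronecker_mul]
    rfl
  have hδ : (if i = j then (1:ℤ) else 0)
      = (if i.1 = j.1 then (1:ℤ) else 0) * (if i.2 = j.2 then (1:ℤ) else 0) := by
    by_cases h : i = j
    · simp [h]
    · rw [Prod.ext_iff] at h
      push_neg at h
      by_cases h1 : i.1 = j.1
      · simp [h1, h h1, Prod.ext_iff]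
      · simp [h1, Prod.ext_iff]
  have hA : (H₁ * H₁.transpose) i.1 j.1
      = (n₁ : ℤ) * (if i.1 = j.1 then 1 else 0) + m₁ * a := by linarith
  have hB : (H₂ * H₂.transpose) i.2 j.2
      = (n₂ : ℤ) * (if i.2 = j.2 then 1 else 0) + m₂ * b := by linarith
  rw [hmul, hA, hB, hδ]
  have : ((n₁:ℤ) * (if i.1 = j.1 then 1 else 0) + m₁ * a) *
      ((n₂:ℤ) * (if i.2 = j.2 then 1 else 0) + m₂ * b)
      - (↑(n₁ * n₂) : ℤ) * ((if i.1 = j.1 then (1:ℤ) else 0) * (if i.2 = j.2 then 1 else 0))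
      = ((n₁:ℤ) * m₂) * ((if i.1 = j.1 then 1 else 0) * b)
        + ((n₂:ℤ) * m₁) * ((if i.2 = j.2 then 1 else 0) * a)
        + ((m₁:ℤ) * m₂) * (a * b) := by
    push_cast
    ring
  rw [this]
  exact dvd_add (dvd_add (hg2.mul_right _) (hg3.mul_right _)) (hg1.mul_right _)
end

section
/- Let D₁ be a v₁×v₁ (0,1)-matrix satisfying D₁D₁ᵀ ≡ (k₁-λ₁)I + λ₁J (mod m) and D₁J ≡ JD₁ ≡ k₁J (mod m), and let D₂ be a v₂×v₂ (0,1)-matrix satisfying the analogous conditions with parameters (v₂,k₂,λ₂). Form the (v₁+v₂)×(v₁+v₂) block matrix D₁ ⊕ D₂ = [[D₁, J],[Jᵀ, D₂]]. If v₁ + v₂ ≡ 4(k₁-λ₁) ≡ 4(k₂-λ₂) ≡ 2(k₁+k₂) (mod m), then the matrix 2(D₁ ⊕ D₂) - J is an m-modular Hadamard matrix of size v₁+v₂. -/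
private lemma sum_expand2 {n : ℕ} (f g : Fin n → ℤ) :
    ∑ a, (2 * f a - 1) * (2 * g a - 1) =
      4 * ∑ a, f a * g a - 2 * ∑ a, f a - 2 * ∑ a, g a + n := by
  have h : ∀ a ∈ Finset.univ, (2 * f a - 1) * (2 * g a - 1)
      = 4 * (f a * g a) - 2 * f a - 2 * g a + 1 := fun a _ => by ring
  rw [Finset.sum_congr rfl h]
  simp [Finset.sum_add_distrib, Finset.sum_sub_distrib, Finset.mul_sum, Finset.card_univ]

private lemma sum_expand1 {n : ℕ} (f : Fin n → ℤ) :
    ∑ a, (2 * f a - 1) = 2 * ∑ a, f a - n := by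
  simp [Finset.sum_sub_distrib, Finset.mul_sum, Finset.card_univ]

theorem stmt_4 (m v₁ v₂ : ℕ) (k₁ k₂ l₁ l₂ : ℤ)
    (D₁ : Matrix (Fin v₁) (Fin v₁) ℤ) (D₂ : Matrix (Fin v₂) (Fin v₂) ℤ)
    (hent₁ : ∀ i j, D₁ i j = 0 ∨ D₁ i j = 1)
    (hent₂ : ∀ i j, D₂ i j = 0 ∨ D₂ i j = 1)
    (hdd₁ : ∀ i j, (m : ℤ) ∣ (D₁ * D₁.transpose) i j -
      ((k₁ - l₁) * (if i = j then 1 else 0) + l₁))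
    (hdd₂ : ∀ i j, (m : ℤ) ∣ (D₂ * D₂.transpose) i j -
      ((k₂ - l₂) * (if i = j then 1 else 0) + l₂))
    (hrow₁ : ∀ i, (m : ℤ) ∣ (∑ j, D₁ i j) - k₁)
    (hcol₁ : ∀ j, (m : ℤ) ∣ (∑ i, D₁ i j) - k₁)
    (hrow₂ : ∀ i, (m : ℤ) ∣ (∑ j, D₂ i j) - k₂)
    (hcol₂ : ∀ j, (m : ℤ) ∣ (∑ i, D₂ i j) - k₂)
    (hc₁ : (m : ℤ) ∣ (v₁ + v₂ : ℕ) - 4 * (k₁ - l₁))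
    (hc₂ : (m : ℤ) ∣ (v₁ + v₂ : ℕ) - 4 * (k₂ - l₂))
    (hc₃ : (m : ℤ) ∣ (v₁ + v₂ : ℕ) - 2 * (k₁ + k₂))
    (M : Matrix (Fin v₁ ⊕ Fin v₂) (Fin v₁ ⊕ Fin v₂) ℤ)
    (hMdef : M = 2 • Matrix.fromBlocks D₁ (Matrix.of fun _ _ => (1 : ℤ))
        (Matrix.of fun _ _ => (1 : ℤ)) D₂ - Matrix.of fun _ _ => (1 : ℤ)) :
    (∀ i j, M i j = 1 ∨ M i j = -1) ∧
    ∀ i j, (m : ℤ) ∣ (M * M.transpose) i j - (v₁ + v₂ : ℕ) * (if i = j then 1 else 0) := by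
  constructor
  · rintro (i|i) (j|j) <;> rw [hMdef] <;>
      simp only [Matrix.sub_apply, Matrix.smul_apply, Matrix.fromBlocks_apply₁₁,
        Matrix.fromBlocks_apply₁₂, Matrix.fromBlocks_apply₂₁, Matrix.fromBlocks_apply₂₂,
        Matrix.of_apply, smul_eq_mul]
    · rcases hent₁ i j with h | h <;> simp [h]
    · norm_num
    · norm_num
    · rcases hent₂ i j with h | h <;> simp [h]
  · rintro (i|i) (j|j)
    · have e : (M * M.transpose) (Sum.inl i) (Sum.inl j) =
          4 * (D₁ * D₁.transpose) i j - 2 * ∑ a, D₁ i a - 2 * ∑ a, D₁ j a + v₁ + v₂ := by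
        rw [hMdef]
        simp [Matrix.mul_apply, Fintype.sum_sum_type, Matrix.fromBlocks]
        rw [sum_expand2]
      rw [e]
      simp only [Sum.inl.injEq]
      obtain ⟨a, ha⟩ := hdd₁ i j
      obtain ⟨b, hb⟩ := hrow₁ i
      obtain ⟨c, hc⟩ := hrow₁ j
      obtain ⟨d, hd⟩ := hc₁
      refine ⟨4 * a - 2 * b - 2 * c + (1 - if i = j then 1 else 0) * d, ?_⟩
      push_cast at ha hb hc hd ⊢
      linear_combination 4 * ha - 2 * hb - 2 * hc + (1 - if i = j then 1 else 0) * hd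
    · have e : (M * M.transpose) (Sum.inl i) (Sum.inr j) =
          2 * ∑ a, D₁ i a + 2 * ∑ b, D₂ j b - v₁ - v₂ := by
        rw [hMdef]
        simp [Matrix.mul_apply, Fintype.sum_sum_type, Matrix.fromBlocks]
        simp only [Finset.mul_sum]
        ring
      rw [e, if_neg (fun h => Sum.inl_ne_inr h), mul_zero, sub_zero]
      obtain ⟨b, hb⟩ := hrow₁ i
      obtain ⟨c, hc⟩ := hrow₂ j
      obtain ⟨d, hd⟩ := hc₃
      refine ⟨2 * b + 2 * c - d, ?_⟩
      push_cast at hb hc hd ⊢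
      linear_combination 2 * hb + 2 * hc - hd
    · have e : (M * M.transpose) (Sum.inr i) (Sum.inl j) =
          2 * ∑ a, D₁ j a + 2 * ∑ b, D₂ i b - v₁ - v₂ := by
        rw [hMdef]
        simp [Matrix.mul_apply, Fintype.sum_sum_type, Matrix.fromBlocks]
        simp only [Finset.mul_sum]
        ring
      rw [e, if_neg (fun h => Sum.inr_ne_inl h), mul_zero, sub_zero]
      obtain ⟨b, hb⟩ := hrow₁ j
      obtain ⟨c, hc⟩ := hrow₂ i
      obtain ⟨d, hd⟩ := hc₃
      refine ⟨2 * b + 2 * c - d, ?_⟩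
      push_cast at hb hc hd ⊢
      linear_combination 2 * hb + 2 * hc - hd
    · have e : (M * M.transpose) (Sum.inr i) (Sum.inr j) =
          4 * (D₂ * D₂.transpose) i j - 2 * ∑ a, D₂ i a - 2 * ∑ a, D₂ j a + v₁ + v₂ := by
        rw [hMdef]
        simp [Matrix.mul_apply, Fintype.sum_sum_type, Matrix.fromBlocks]
        rw [sum_expand2]
        ring
      rw [e]
      simp only [Sum.inr.injEq]
      obtain ⟨a, ha⟩ := hdd₂ i j
      obtain ⟨b, hb⟩ := hrow₂ i
      obtain ⟨c, hc⟩ := hrow₂ j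
      obtain ⟨d, hd⟩ := hc₂
      refine ⟨4 * a - 2 * b - 2 * c + (1 - if i = j then 1 else 0) * d, ?_⟩
      push_cast at ha hb hc hd ⊢
      linear_combination 4 * ha - 2 * hb - 2 * hc + (1 - if i = j then 1 else 0) * hd
end

section
/- Let H be a normalized m-modular Hadamard matrix of size n with gcd(n,m) = 1 and n, m ≥ 3. Then the (n-1)×(n-1) matrix D = (C + J)/2, where C is the core of H (H with its first row and column deleted), is an m-modular symmetric design with parameters (n-1, 2^{φ(m)-1}(n-2), 2^{φ(m)-2}(n-4); m), where φ is Euler's totient function. -/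
set_option maxHeartbeats 1000000



private lemma stmt_5_odd_aux (n m : ℕ) (hn : 2 < n) (hgcd : Nat.gcd n m = 1)
    (H : Matrix (Fin n) (Fin n) ℤ)
    (hent : ∀ i j, H i j = 1 ∨ H i j = -1)
    (hmod : ∀ i j, (m : ℤ) ∣ (H * H.transpose) i j - n * (if i = j then 1 else 0))
    (hnorm_row : ∀ j, H ⟨0, by omega⟩ j = 1) : Odd m := by
  rcases Nat.even_or_odd m with hev | h
  case inr => exact h
  exfalso
  obtain ⟨k, hk⟩ := hev
  have h2m : (2 : ℤ) ∣ (m : ℤ) := ⟨k, by push_cast [hk]; ring⟩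
  have hne : (⟨1, by omega⟩ : Fin n) ≠ ⟨0, by omega⟩ := by
    simp [Fin.ext_iff]
  have hS := hmod ⟨1, by omega⟩ ⟨0, by omega⟩
  rw [if_neg hne, mul_zero, sub_zero] at hS
  have hsum : (H * H.transpose) ⟨1, by omega⟩ ⟨0, by omega⟩
      = ∑ k, H ⟨1, by omega⟩ k := by
    simp [Matrix.mul_apply, Matrix.transpose_apply, hnorm_row]
  rw [hsum] at hS
  have hpar : (2 : ℤ) ∣ (∑ k, H ⟨1, by omega⟩ k) - n := by
    have hsub : (∑ k : Fin n, H ⟨1, by omega⟩ k) - n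
        = ∑ k : Fin n, (H ⟨1, by omega⟩ k - 1) := by
      rw [Finset.sum_sub_distrib]; simp
    rw [hsub]
    apply Finset.dvd_sum
    intro k _
    rcases hent ⟨1, by omega⟩ k with h | h <;> rw [h] <;> norm_num
  have hdS : (2 : ℤ) ∣ ∑ k, H ⟨1, by omega⟩ k := h2m.trans hS
  have h2n : (2 : ℤ) ∣ (n : ℤ) := by
    have := hdS.sub hpar
    simpa using this
  have h2n' : 2 ∣ n := by exact_mod_cast h2n
  have h2m' : 2 ∣ m := by exact_mod_cast h2m
  have := Nat.dvd_gcd h2n' h2m'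
  omega

theorem stmt_5 (n m : ℕ) (hn : 3 ≤ n) (hm : 3 ≤ m) (hgcd : Nat.gcd n m = 1)
    (H : Matrix (Fin n) (Fin n) ℤ)
    (hent : ∀ i j, H i j = 1 ∨ H i j = -1)
    (hmod : ∀ i j, (m : ℤ) ∣ (H * H.transpose) i j - n * (if i = j then 1 else 0))
    (hnorm_row : ∀ j, H ⟨0, by omega⟩ j = 1)
    (hnorm_col : ∀ i, H i ⟨0, by omega⟩ = 1)
    (D : Matrix (Fin (n - 1)) (Fin (n - 1)) ℤ)
    (hD : ∀ i j, D i j =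
      (H (Fin.cast (by omega : n - 1 + 1 = n) i.succ)
         (Fin.cast (by omega : n - 1 + 1 = n) j.succ) + 1) / 2) :
    (∀ i j, D i j = 0 ∨ D i j = 1) ∧
    (∀ i j, (m : ℤ) ∣ (D * D.transpose) i j -
      (((2 ^ (Nat.totient m - 1) * (n - 2) : ℤ) - (2 ^ (Nat.totient m - 2) * (n - 4) : ℤ)) *
        (if i = j then 1 else 0) + (2 ^ (Nat.totient m - 2) * (n - 4) : ℤ))) ∧
    (∀ i, (m : ℤ) ∣ (∑ j, D i j) - 2 ^ (Nat.totient m - 1) * (n - 2)) ∧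
    (∀ j, (m : ℤ) ∣ (∑ i, D i j) - 2 ^ (Nat.totient m - 1) * (n - 2)) := by
  haveI : NeZero m := ⟨by omega⟩
  have e : n - 1 + 1 = n := by omega
  have hz : ∀ (hp : 0 < n), (⟨0, hp⟩ : Fin n) = Fin.cast e 0 := by
    intro hp; apply Fin.ext; rfl
  -- entries of D
  have h2D : ∀ i j, (2 : ℤ) * D i j = H (Fin.cast e i.succ) (Fin.cast e j.succ) + 1 := by
    intro i j
    rcases hent (Fin.cast e i.succ) (Fin.cast e j.succ) with h | h <;>
      rw [hD i j, h] <;> norm_num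
  have hD01 : ∀ i j, D i j = 0 ∨ D i j = 1 := by
    intro i j
    rcases hent (Fin.cast e i.succ) (Fin.cast e j.succ) with h | h
    · right; rw [hD i j, h]; norm_num
    · left; rw [hD i j, h]; norm_num
  -- m is odd
  have hodd : Odd m := stmt_5_odd_aux n m hn hgcd H hent hmod hnorm_row
  have hcop2 : Nat.Coprime 2 m := by
    have hmo : m % 2 = 1 := Nat.odd_iff.mp hodd
    have : ¬ (2 ∣ m) := by omega
    exact (Nat.Prime.coprime_iff_not_dvd Nat.prime_two).mpr this
  set t := Nat.totient m with hTdef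
  have ht2 : 2 ≤ t := by
    have hpos : 0 < t := Nat.totient_pos.mpr (by omega)
    obtain ⟨k, hk⟩ := Nat.totient_even (show 2 < m by omega)
    omega
  have hpow : (2 : ZMod m) ^ t = 1 := by
    have h := (ZMod.natCast_eq_natCast_iff _ _ _).mpr (Nat.ModEq.pow_totient hcop2)
    push_cast at h
    exact h
  have hi4 : (2 : ZMod m) ^ (t - 2) * 4 = 1 := by
    have : (2 : ZMod m) ^ (t - 2) * 4 = 2 ^ (t - 2 + 2) := by rw [pow_add]; ring
    rw [this, show t - 2 + 2 = t by omega, hpow]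
  have hp12 : (2 : ZMod m) ^ (t - 2) * 2 = 2 ^ (t - 1) := by
    rw [show t - 1 = t - 2 + 1 by omega, pow_succ]
  have hi2 : (2 : ZMod m) ^ (t - 1) * 2 = 1 := by
    rw [show (2 : ZMod m) ^ (t-1) * 2 = 2 ^ (t - 1 + 1) from (pow_succ _ _).symm,
      show t - 1 + 1 = t by omega, hpow]
  -- modular orthogonality of rows, in ZMod m
  have hmodR : ∀ i j : Fin n, (∑ k, (H i k : ZMod m) * (H j k : ZMod m))
      = if i = j then (n : ZMod m) else 0 := by
    intro i j
    have hm' := hmod i j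
    rcases eq_or_ne i j with rfl | hij
    · rw [if_pos rfl, mul_one] at hm'
      rw [if_pos rfl]
      have h := (ZMod.intCast_zmod_eq_zero_iff_dvd _ m).mpr hm'
      push_cast [Matrix.mul_apply, Matrix.transpose_apply] at h
      linear_combination h
    · rw [if_neg hij, mul_zero, sub_zero] at hm'
      rw [if_neg hij]
      have h := (ZMod.intCast_zmod_eq_zero_iff_dvd _ m).mpr hm'
      push_cast [Matrix.mul_apply, Matrix.transpose_apply] at h
      exact h
  -- column orthogonality via invertibility
  have hmodC : ∀ i j : Fin n, (∑ k, (H k i : ZMod m) * (H k j : ZMod m))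
      = if i = j then (n : ZMod m) else 0 := by
    set A : Matrix (Fin n) (Fin n) (ZMod m) := H.map (Int.cast) with hA
    have hAAt : A * A.transpose = (n : ZMod m) • 1 := by
      ext i j
      simp only [Matrix.mul_apply, Matrix.transpose_apply, Matrix.smul_apply,
        Matrix.one_apply, hA, Matrix.map_apply, smul_eq_mul]
      rw [hmodR i j]
      split <;> simp
    have hu : IsUnit ((n : ZMod m)) := (ZMod.isUnit_iff_coprime n m).mpr hgcd
    obtain ⟨u, hu⟩ := hu
    have h1 : A * (((u⁻¹ : (ZMod m)ˣ) : ZMod m) • A.transpose) = 1 := by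
      rw [Matrix.mul_smul, hAAt, ← hu, smul_smul, Units.inv_mul, one_smul]
    have h2 := mul_eq_one_comm.mp h1
    have h3 : A.transpose * A = (n : ZMod m) • 1 := by
      calc A.transpose * A = (((u : (ZMod m)ˣ) : ZMod m) * ((u⁻¹ : (ZMod m)ˣ) : ZMod m)) • (A.transpose * A) := by
            rw [Units.mul_inv, one_smul]
        _ = (u : ZMod m) • ((((u⁻¹ : (ZMod m)ˣ) : ZMod m) • A.transpose) * A) := by
            rw [mul_smul, Matrix.smul_mul]
        _ = (u : ZMod m) • 1 := by rw [h2]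
        _ = (n : ZMod m) • 1 := by rw [hu]
    intro i j
    have := congrFun (congrFun h3 i) j
    simp only [Matrix.mul_apply, Matrix.transpose_apply, Matrix.smul_apply,
      Matrix.one_apply, hA, Matrix.map_apply, smul_eq_mul] at this
    rw [this]
    split <;> simp
  -- splitting sums over Fin n
  have sum_split : ∀ (g : Fin n → ZMod m),
      ∑ k, g k = g ⟨0, by omega⟩ + ∑ i : Fin (n - 1), g (Fin.cast e i.succ) := by
    intro g
    rw [← Equiv.sum_comp (finCongr e) g, Fin.sum_univ_succ]
    congr 1
  -- f i ≠ 0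
  have hfz : ∀ i : Fin (n - 1), Fin.cast e i.succ ≠ (⟨0, by omega⟩ : Fin n) := by
    intro i h
    have := congrArg Fin.val h
    simp at this
  have hfinj : ∀ i j : Fin (n - 1), Fin.cast e i.succ = Fin.cast e j.succ ↔ i = j := by
    intro i j
    constructor
    · intro h
      have := congrArg Fin.val h
      simp only [Fin.coe_cast, Fin.val_succ] at this
      exact Fin.ext (by omega)
    · rintro rfl; rfl
  -- partial row sums of H (over core columns)
  have hSrow : ∀ i : Fin (n - 1),
      ∑ k : Fin (n - 1), (H (Fin.cast e i.succ) (Fin.cast e k.succ) : ZMod m) = -1 := by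
    intro i
    have hfull : ∑ k : Fin n, (H (Fin.cast e i.succ) k : ZMod m) = 0 := by
      have h := hmodR (Fin.cast e i.succ) ⟨0, by omega⟩
      rw [if_neg (hfz i)] at h
      simpa [hnorm_row] using (by
        calc (∑ k : Fin n, (H (Fin.cast e i.succ) k : ZMod m))
            = ∑ k, (H (Fin.cast e i.succ) k : ZMod m) * (H ⟨0, by omega⟩ k : ZMod m) := by
              apply Finset.sum_congr rfl; intro k _; rw [hnorm_row k]; push_cast; ring
          _ = 0 := h)
    have := sum_split (fun k => (H (Fin.cast e i.succ) k : ZMod m))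
    rw [hfull, hnorm_col] at this
    have h1 : ((1 : ℤ) : ZMod m) = 1 := by push_cast; rfl
    rw [h1] at this
    linear_combination -this
  -- partial column sums
  have hScol : ∀ j : Fin (n - 1),
      ∑ k : Fin (n - 1), (H (Fin.cast e k.succ) (Fin.cast e j.succ) : ZMod m) = -1 := by
    intro j
    have hfull : ∑ k : Fin n, (H k (Fin.cast e j.succ) : ZMod m) = 0 := by
      have h := hmodC ⟨0, by omega⟩ (Fin.cast e j.succ)
      rw [if_neg (Ne.symm (hfz j))] at h
      calc (∑ k : Fin n, (H k (Fin.cast e j.succ) : ZMod m))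
          = ∑ k, (H k ⟨0, by omega⟩ : ZMod m) * (H k (Fin.cast e j.succ) : ZMod m) := by
            apply Finset.sum_congr rfl; intro k _; rw [hnorm_col k]; push_cast; ring
        _ = 0 := h
    have := sum_split (fun k => (H k (Fin.cast e j.succ) : ZMod m))
    rw [hfull, hnorm_row] at this
    have h1 : ((1 : ℤ) : ZMod m) = 1 := by push_cast; rfl
    rw [h1] at this
    linear_combination -this
  -- cast of key identity
  have h2DR : ∀ i j, (2 : ZMod m) * ((D i j : ℤ) : ZMod m)
      = ((H (Fin.cast e i.succ) (Fin.cast e j.succ) : ℤ) : ZMod m) + 1 := by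
    intro i j
    have := congrArg (fun x : ℤ => (x : ZMod m)) (h2D i j)
    push_cast at this
    push_cast
    linear_combination this
  have hcardR : ((Finset.univ : Finset (Fin (n - 1))).card : ZMod m) = (n : ZMod m) - 1 := by
    rw [Finset.card_univ, Fintype.card_fin]
    have h1 : (1 : ℕ) ≤ n := by omega
    push_cast [Nat.cast_sub h1]
    ring
  -- row sums of D
  have hrowD : ∀ i : Fin (n - 1),
      (2 : ZMod m) * ∑ j, ((D i j : ℤ) : ZMod m) = (n : ZMod m) - 2 := by
    intro i
    rw [Finset.mul_sum]
    calc ∑ j, (2 : ZMod m) * ((D i j : ℤ) : ZMod m)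
        = ∑ j : Fin (n - 1),
            (((H (Fin.cast e i.succ) (Fin.cast e j.succ) : ℤ) : ZMod m) + 1) :=
          Finset.sum_congr rfl fun j _ => h2DR i j
      _ = (∑ j : Fin (n - 1), ((H (Fin.cast e i.succ) (Fin.cast e j.succ) : ℤ) : ZMod m))
            + ((Finset.univ : Finset (Fin (n - 1))).card : ZMod m) := by
          rw [Finset.sum_add_distrib]; simp
      _ = (-1) + ((n : ZMod m) - 1) := by rw [hSrow i, hcardR]
      _ = (n : ZMod m) - 2 := by ring
  -- column sums of D
  have hcolD : ∀ j : Fin (n - 1),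
      (2 : ZMod m) * ∑ i, ((D i j : ℤ) : ZMod m) = (n : ZMod m) - 2 := by
    intro j
    rw [Finset.mul_sum]
    calc ∑ i, (2 : ZMod m) * ((D i j : ℤ) : ZMod m)
        = ∑ i : Fin (n - 1),
            (((H (Fin.cast e i.succ) (Fin.cast e j.succ) : ℤ) : ZMod m) + 1) :=
          Finset.sum_congr rfl fun i _ => h2DR i j
      _ = (∑ i : Fin (n - 1), ((H (Fin.cast e i.succ) (Fin.cast e j.succ) : ℤ) : ZMod m))
            + ((Finset.univ : Finset (Fin (n - 1))).card : ZMod m) := by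
          rw [Finset.sum_add_distrib]; simp
      _ = (-1) + ((n : ZMod m) - 1) := by rw [hScol j, hcardR]
      _ = (n : ZMod m) - 2 := by ring
  -- inner products of D rows
  have hDDt : ∀ i j : Fin (n - 1),
      (4 : ZMod m) * (((D * D.transpose) i j : ℤ) : ZMod m)
      = (if i = j then (n : ZMod m) else 0) + (n : ZMod m) - 4 := by
    intro i j
    have hcast : (((D * D.transpose) i j : ℤ) : ZMod m)
        = ∑ k, ((D i k : ℤ) : ZMod m) * ((D j k : ℤ) : ZMod m) := by
      push_cast [Matrix.mul_apply, Matrix.transpose_apply]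
      rfl
    rw [hcast, Finset.mul_sum]
    have hterm : ∀ k : Fin (n - 1),
        (4 : ZMod m) * (((D i k : ℤ) : ZMod m) * ((D j k : ℤ) : ZMod m))
        = ((H (Fin.cast e i.succ) (Fin.cast e k.succ) : ℤ) : ZMod m)
            * ((H (Fin.cast e j.succ) (Fin.cast e k.succ) : ℤ) : ZMod m)
          + ((H (Fin.cast e i.succ) (Fin.cast e k.succ) : ℤ) : ZMod m)
          + ((H (Fin.cast e j.succ) (Fin.cast e k.succ) : ℤ) : ZMod m) + 1 := by
      intro k
      have h1 := h2DR i k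
      have h2 := h2DR j k
      calc (4 : ZMod m) * (((D i k : ℤ) : ZMod m) * ((D j k : ℤ) : ZMod m))
          = ((2 : ZMod m) * ((D i k : ℤ) : ZMod m))
            * ((2 : ZMod m) * ((D j k : ℤ) : ZMod m)) := by ring
        _ = (((H (Fin.cast e i.succ) (Fin.cast e k.succ) : ℤ) : ZMod m) + 1)
            * (((H (Fin.cast e j.succ) (Fin.cast e k.succ) : ℤ) : ZMod m) + 1) := by
            rw [h1, h2]
        _ = _ := by ring
    rw [Finset.sum_congr rfl fun k _ => hterm k]
    have hHH : ∑ k : Fin (n - 1),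
        ((H (Fin.cast e i.succ) (Fin.cast e k.succ) : ℤ) : ZMod m)
          * ((H (Fin.cast e j.succ) (Fin.cast e k.succ) : ℤ) : ZMod m)
        = (if i = j then (n : ZMod m) else 0) - 1 := by
      have hfull := hmodR (Fin.cast e i.succ) (Fin.cast e j.succ)
      have hsplit := sum_split (fun k =>
        (H (Fin.cast e i.succ) k : ZMod m) * (H (Fin.cast e j.succ) k : ZMod m))
      rw [hfull] at hsplit
      simp only [hnorm_col] at hsplit
      have h1 : ((1 : ℤ) : ZMod m) = 1 := by push_cast; rfl
      rw [h1, one_mul] at hsplit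
      simp only [hfinj i j] at hsplit
      linear_combination -hsplit
    calc ∑ k : Fin (n - 1),
          (((H (Fin.cast e i.succ) (Fin.cast e k.succ) : ℤ) : ZMod m)
            * ((H (Fin.cast e j.succ) (Fin.cast e k.succ) : ℤ) : ZMod m)
          + ((H (Fin.cast e i.succ) (Fin.cast e k.succ) : ℤ) : ZMod m)
          + ((H (Fin.cast e j.succ) (Fin.cast e k.succ) : ℤ) : ZMod m) + 1)
        = (∑ k : Fin (n - 1),
            ((H (Fin.cast e i.succ) (Fin.cast e k.succ) : ℤ) : ZMod m)
              * ((H (Fin.cast e j.succ) (Fin.cast e k.succ) : ℤ) : ZMod m))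
          + (∑ k : Fin (n - 1), ((H (Fin.cast e i.succ) (Fin.cast e k.succ) : ℤ) : ZMod m))
          + (∑ k : Fin (n - 1), ((H (Fin.cast e j.succ) (Fin.cast e k.succ) : ℤ) : ZMod m))
          + ((Finset.univ : Finset (Fin (n - 1))).card : ZMod m) := by
          simp [Finset.sum_add_distrib]
      _ = ((if i = j then (n : ZMod m) else 0) - 1) + (-1) + (-1) + ((n : ZMod m) - 1) := by
          rw [hHH, hSrow i, hSrow j, hcardR]
      _ = (if i = j then (n : ZMod m) else 0) + (n : ZMod m) - 4 := by ring
  refine ⟨hD01, ?_, ?_, ?_⟩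
  · -- main divisibility
    intro i j
    rw [← ZMod.intCast_zmod_eq_zero_iff_dvd]
    have h4 := hDDt i j
    rcases eq_or_ne i j with rfl | hij
    · rw [if_pos rfl] at h4 ⊢
      push_cast
      rw [sub_eq_zero]
      calc (((D * D.transpose) i i : ℤ) : ZMod m)
          = ((2 : ZMod m) ^ (t - 2) * 4) * (((D * D.transpose) i i : ℤ) : ZMod m) := by
            rw [hi4, one_mul]
        _ = (2 : ZMod m) ^ (t - 2) * ((4 : ZMod m) * (((D * D.transpose) i i : ℤ) : ZMod m)) := by
            ring
        _ = (2 : ZMod m) ^ (t - 2) * ((n : ZMod m) + (n : ZMod m) - 4) := by rw [h4]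
        _ = ((2 : ZMod m) ^ (t - 2) * 2) * ((n : ZMod m) - 2) := by ring
        _ = (2 : ZMod m) ^ (t - 1) * ((n : ZMod m) - 2) := by rw [hp12]
        _ = (2 ^ (t - 1) * ((n : ZMod m) - 2) - 2 ^ (t - 2) * ((n : ZMod m) - 4)) * 1
              + 2 ^ (t - 2) * ((n : ZMod m) - 4) := by ring
    · rw [if_neg hij] at h4 ⊢
      push_cast
      rw [sub_eq_zero]
      calc (((D * D.transpose) i j : ℤ) : ZMod m)
          = ((2 : ZMod m) ^ (t - 2) * 4) * (((D * D.transpose) i j : ℤ) : ZMod m) := by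
            rw [hi4, one_mul]
        _ = (2 : ZMod m) ^ (t - 2) * ((4 : ZMod m) * (((D * D.transpose) i j : ℤ) : ZMod m)) := by
            ring
        _ = (2 : ZMod m) ^ (t - 2) * ((0 : ZMod m) + (n : ZMod m) - 4) := by rw [h4]
        _ = (2 ^ (t - 1) * ((n : ZMod m) - 2) - 2 ^ (t - 2) * ((n : ZMod m) - 4)) * 0
              + 2 ^ (t - 2) * ((n : ZMod m) - 4) := by ring
  · intro i
    rw [← ZMod.intCast_zmod_eq_zero_iff_dvd]
    push_cast
    rw [sub_eq_zero]
    calc ∑ j, ((D i j : ℤ) : ZMod m)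
        = ((2 : ZMod m) ^ (t - 1) * 2) * ∑ j, ((D i j : ℤ) : ZMod m) := by
          rw [hi2, one_mul]
      _ = (2 : ZMod m) ^ (t - 1) * ((2 : ZMod m) * ∑ j, ((D i j : ℤ) : ZMod m)) := by ring
      _ = (2 : ZMod m) ^ (t - 1) * ((n : ZMod m) - 2) := by rw [hrowD i]
  · intro j
    rw [← ZMod.intCast_zmod_eq_zero_iff_dvd]
    push_cast
    rw [sub_eq_zero]
    calc ∑ i, ((D i j : ℤ) : ZMod m)
        = ((2 : ZMod m) ^ (t - 1) * 2) * ∑ i, ((D i j : ℤ) : ZMod m) := by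
          rw [hi2, one_mul]
      _ = (2 : ZMod m) ^ (t - 1) * ((2 : ZMod m) * ∑ i, ((D i j : ℤ) : ZMod m)) := by ring
      _ = (2 : ZMod m) ^ (t - 1) * ((n : ZMod m) - 2) := by rw [hcolD j]
end

section
/- For n ≥ 3, there is no n×n (±1)-matrix H with H Hᵀ ≡ nI (mod 7) when n ≡ 3, 5, or 13 (mod 14). -/
local instance fact7 : Fact (Nat.Prime 7) := ⟨by norm_num⟩

theorem stmt_6 (n : ℕ) (hn : 3 ≤ n) (hmod : n % 14 = 3 ∨ n % 14 = 5 ∨ n % 14 = 13) :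
    ¬ ∃ H : Matrix (Fin n) (Fin n) ℤ,
      (∀ i j, H i j = 1 ∨ H i j = -1) ∧
      (∀ i j, (7 : ℤ) ∣ (H * H.transpose) i j - n * (if i = j then 1 else 0)) := by
  rintro ⟨H, -, hdvd⟩
  set K := H.map (Int.cast : ℤ → ZMod 7) with hK
  have hmul : K * K.transpose = (n : ZMod 7) • 1 := by
    ext i j
    obtain ⟨c, hc⟩ := hdvd i j
    have h0 : (((H * H.transpose) i j - n * (if i = j then 1 else 0) : ℤ) : ZMod 7) = 0 := by
      rw [hc, Int.cast_mul, show ((7:ℤ):ZMod 7) = 0 from by decide, zero_mul]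
    have hcast : (((H * H.transpose) i j : ℤ) : ZMod 7) = (K * K.transpose) i j := by
      simp [Matrix.mul_apply, hK, Matrix.map_apply]
    rw [Int.cast_sub, sub_eq_zero, hcast] at h0
    rw [h0]
    push_cast
    simp [Matrix.smul_apply, Matrix.one_apply, mul_ite]
  have hdet : (K.det) ^ 2 = (n : ZMod 7) ^ n := by
    have := congrArg Matrix.det hmul
    rw [Matrix.det_mul, Matrix.det_transpose, Matrix.det_smul, Matrix.det_one, mul_one,
      Fintype.card_fin] at this
    rw [sq]; exact this
  have hn7 : (n : ZMod 7) = ((n % 14 : ℕ) : ZMod 7) := by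
    rw [show ((n % 14 : ℕ) : ZMod 7) = ((n % 14 % 7 : ℕ) : ZMod 7) from
      (ZMod.natCast_mod _ 7).symm, Nat.mod_mod_of_dvd n (by norm_num), ZMod.natCast_mod]
  have hn0 : (n : ZMod 7) ≠ 0 := by
    rw [hn7]; rcases hmod with h | h | h <;> rw [h] <;> decide
  obtain ⟨k, hk⟩ : ∃ k, n = 2 * k + 1 := ⟨n / 2, by omega⟩
  have hsq : ∃ x : ZMod 7, x ^ 2 = (n : ZMod 7) := by
    have he : ((n : ZMod 7) ^ k) ≠ 0 := pow_ne_zero _ hn0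
    refine ⟨K.det * ((n : ZMod 7) ^ k)⁻¹, ?_⟩
    have h2 : (K.det) ^ 2 = ((n : ZMod 7) ^ k) ^ 2 * (n : ZMod 7) := by
      rw [hdet, show (n : ZMod 7) ^ n = ((n : ZMod 7) ^ k) ^ 2 * (n : ZMod 7) from by
        rw [← pow_mul, ← pow_succ]; congr 1; omega]
    rw [mul_pow, h2, mul_comm, ← mul_assoc, ← mul_pow, inv_mul_cancel₀ (G₀ := ZMod 7) he, one_pow, one_mul]
  obtain ⟨x, hx⟩ := hsq
  rw [hn7] at hx
  rcases hmod with h | h | h <;> rw [h] at hx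
  · exact (by decide : ∀ y : ZMod 7, ¬ y ^ 2 = ((3 : ℕ) : ZMod 7)) x hx
  · exact (by decide : ∀ y : ZMod 7, ¬ y ^ 2 = ((5 : ℕ) : ZMod 7)) x hx
  · exact (by decide : ∀ y : ZMod 7, ¬ y ^ 2 = ((13 : ℕ) : ZMod 7)) x hx
end

section
/- For every n ≥ 3 with n ≡ 0 or 4 (mod 8), an 8-modular Hadamard matrix of size n exists; and for n ≥ 3 with n ≡ 1,2,3,5,6,7 (mod 8), no 8-modular Hadamard matrix of size n exists. That is, for n ≥ 3, an MH(n,8) exists if and only if n ≡ 0 (mod 4). -/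
theorem stmt_7 (n : ℕ) (hn : 3 ≤ n) :
    (∃ H : Matrix (Fin n) (Fin n) ℤ,
      (∀ i j, H i j = 1 ∨ H i j = -1) ∧
      (∀ i j, (8 : ℤ) ∣ (H * H.transpose) i j - n * (if i = j then 1 else 0))) ↔
    n % 4 = 0 := by
  constructor
  · rintro ⟨H, hpm, hdiv⟩
    set i0 : Fin n := ⟨0, by omega⟩ with hi0
    set i1 : Fin n := ⟨1, by omega⟩ with hi1
    set i2 : Fin n := ⟨2, by omega⟩ with hi2
    have h01 : i0 ≠ i1 := by simp [hi0, hi1, Fin.ext_iff]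
    have h02 : i0 ≠ i2 := by simp [hi0, hi2, Fin.ext_iff]
    have h12 : i1 ≠ i2 := by simp [hi1, hi2, Fin.ext_iff]
    have key : ∀ (a b : Fin n), a ≠ b → (8:ℤ) ∣ ∑ k, H a k * H b k := by
      intro a b hab
      have := hdiv a b
      simpa [Matrix.mul_apply, Matrix.transpose_apply, hab] using this
    have hsq : ∑ k, H i0 k * H i0 k = (n:ℤ) := by
      have h : ∀ k : Fin n, H i0 k * H i0 k = 1 := fun k => by
        rcases hpm i0 k with h|h <;> simp [h]
      simp [h]
    have h4 : (4:ℤ) ∣ ∑ k : Fin n, (H i0 k + H i1 k) * (H i0 k + H i2 k) := by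
      apply Finset.dvd_sum
      intro k _
      rcases hpm i0 k with h0|h0 <;> rcases hpm i1 k with h1|h1 <;>
        rcases hpm i2 k with h2|h2 <;> simp [h0, h1, h2] <;> norm_num
    have expand : ∑ k : Fin n, (H i0 k + H i1 k) * (H i0 k + H i2 k)
        = (∑ k, H i0 k * H i0 k) + (∑ k, H i0 k * H i2 k)
          + (∑ k, H i1 k * H i0 k) + (∑ k, H i1 k * H i2 k) := by
      rw [← Finset.sum_add_distrib, ← Finset.sum_add_distrib, ← Finset.sum_add_distrib]
      exact Finset.sum_congr rfl fun k _ => by ring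
    have d1 := key i0 i2 h02
    have d2 := key i1 i0 h01.symm
    have d3 := key i1 i2 h12
    rw [expand, hsq] at h4
    have hdvd : (4:ℤ) ∣ (n:ℤ) := by omega
    have : (4:ℕ) ∣ n := by exact_mod_cast hdvd
    omega
  · intro h4
    rcases (by omega : n % 8 = 0 ∨ n % 8 = 4) with h8 | h8
    · refine ⟨Matrix.of fun _ _ => 1, fun i j => Or.inl rfl, ?_⟩
      intro i j
      have : (8:ℤ) ∣ (n:ℤ) := by exact_mod_cast (by omega : (8:ℕ) ∣ n)
      by_cases hij : i = j <;>
        simp [Matrix.mul_apply, Matrix.transpose_apply, hij, this]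
    · refine ⟨Matrix.of fun i j => if i = j then -1 else 1,
        fun i j => by by_cases h : i = j <;> simp [h], ?_⟩
      intro i j
      by_cases hij : i = j
      · subst hij
        have h : ∀ k : Fin n, (if i = k then (-1:ℤ) else 1) * (if i = k then -1 else 1) = 1 := by
          intro k; by_cases h : i = k <;> simp [h]
        simp [Matrix.mul_apply, Matrix.transpose_apply, h]
      · have hsum : ∑ k : Fin n, (if i = k then (-1:ℤ) else 1) * (if j = k then -1 else 1)
            = (n:ℤ) - 4 := by
          have step : ∀ k : Fin n, (if i = k then (-1:ℤ) else 1) * (if j = k then -1 else 1)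
              = 1 + ((if i = k then (-2:ℤ) else 0) + (if j = k then -2 else 0)) := by
            intro k
            by_cases h1 : i = k <;> by_cases h2 : j = k
            · exact absurd (h1.trans h2.symm) hij
            all_goals simp [h1, h2]
          simp only [step]
          rw [Finset.sum_add_distrib, Finset.sum_add_distrib]
          simp [Finset.sum_ite_eq, hij]
          ring
        have h8' : (8:ℤ) ∣ (n:ℤ) - 4 := by
          have hd : (8:ℕ) ∣ (n - 4) := by omega
          have h4n : (4:ℕ) ≤ n := by omega
          have := Int.natCast_dvd_natCast.mpr hd
          push_cast [h4n] at this
          exact this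
        simp only [Matrix.mul_apply, Matrix.transpose_apply, Matrix.of_apply, if_neg hij, mul_zero, sub_zero]
        rw [hsum]
        exact h8'
end

section
/- Let n ≥ 3 and let H be an m-modular Hadamard matrix of size n. Then gcd(m,4) divides n. -/
theorem stmt_8 (n m : ℕ) (hn : 3 ≤ n) (H : Matrix (Fin n) (Fin n) ℤ)
    (hent : ∀ i j, H i j = 1 ∨ H i j = -1)
    (hmod : ∀ i j, (m : ℤ) ∣ (H * H.transpose) i j - n * (if i = j then 1 else 0)) :
    Nat.gcd m 4 ∣ n := by
  set g := Nat.gcd m 4 with hg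
  let i0 : Fin n := ⟨0, by omega⟩
  let i1 : Fin n := ⟨1, by omega⟩
  let i2 : Fin n := ⟨2, by omega⟩
  have hne01 : i0 ≠ i1 := by simp [i0, i1, Fin.ext_iff]
  have hne02 : i0 ≠ i2 := by simp [i0, i2, Fin.ext_iff]
  have hne12 : i1 ≠ i2 := by simp [i1, i2, Fin.ext_iff]
  have S : Fin n → Fin n → ℤ := fun i j => ∑ k, H i k * H j k
  have hd : ∀ i j : Fin n, i ≠ j → (m : ℤ) ∣ ∑ k, H i k * H j k := by
    intro i j hij
    have := hmod i j
    simpa [Matrix.mul_apply, Matrix.transpose_apply, hij] using this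
  have hnsum : (n : ℤ) = ∑ k : Fin n, H i0 k * H i0 k := by
    have : ∀ k : Fin n, H i0 k * H i0 k = 1 := by
      intro k; rcases hent i0 k with h | h <;> rw [h] <;> ring
    simp [this]
  have key : (∑ k, H i0 k * H i1 k) + (∑ k, H i0 k * H i2 k)
      + (∑ k, H i1 k * H i2 k) + (n : ℤ)
      = ∑ k : Fin n, (H i0 k + H i1 k) * (H i0 k + H i2 k) := by
    rw [hnsum, ← Finset.sum_add_distrib, ← Finset.sum_add_distrib,
      ← Finset.sum_add_distrib]
    exact Finset.sum_congr rfl fun k _ => by ring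
  have h4 : (4 : ℤ) ∣ (∑ k, H i0 k * H i1 k) + (∑ k, H i0 k * H i2 k)
      + (∑ k, H i1 k * H i2 k) + (n : ℤ) := by
    rw [key]
    refine Finset.dvd_sum fun k _ => ?_
    rcases hent i0 k with h0 | h0 <;> rcases hent i1 k with h1 | h1 <;>
      rcases hent i2 k with h2 | h2 <;> rw [h0, h1, h2] <;> norm_num
  have hgZ : ((g : ℤ)) ∣ (n : ℤ) := by
    have hgm : (g : ℤ) ∣ (m : ℤ) := Int.natCast_dvd_natCast.2 (Nat.gcd_dvd_left m 4)
    have hg4 : (g : ℤ) ∣ 4 := by exact_mod_cast Int.natCast_dvd_natCast.2 (Nat.gcd_dvd_right m 4)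
    have h1 := hgm.trans (hd i0 i1 hne01)
    have h2 := hgm.trans (hd i0 i2 hne02)
    have h3 := hgm.trans (hd i1 i2 hne12)
    have h4' := hg4.trans h4
    have : (n : ℤ) = ((∑ k, H i0 k * H i1 k) + (∑ k, H i0 k * H i2 k)
        + (∑ k, H i1 k * H i2 k) + (n : ℤ)) - (∑ k, H i0 k * H i1 k)
        - (∑ k, H i0 k * H i2 k) - (∑ k, H i1 k * H i2 k) := by ring
    rw [this]
    exact dvd_sub (dvd_sub (dvd_sub h4' h1) h2) h3
  exact_mod_cast hgZ
end

section
/- Suppose H is an m-modular Hadamard matrix of size n, and suppose there exists a (0,1)-matrix D which is an m-modular symmetric design with parameters (v,k,λ;m) satisfying v ≡ 1 (mod m), k ≡ 1 (mod m), and 4λ ≡ 4-n (mod m). Then for every integer l ≥ 0, there exists an m-modular Hadamard matrix of size n + l(v-1). (Assume m is odd, n,m ≥ 3, and gcd(n,m) = 1 so that cores of the constructed matrices are again modular symmetric designs.) -/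
lemma transport_MH (m a b : ℕ) (h : a = b)
    (H : Matrix (Fin a) (Fin a) ℤ)
    (h1 : ∀ i j, H i j = 1 ∨ H i j = -1)
    (h2 : ∀ i j, (m : ℤ) ∣ (H * H.transpose) i j - (a : ℤ) * (if i = j then 1 else 0)) :
    ∃ H' : Matrix (Fin b) (Fin b) ℤ,
      (∀ i j, H' i j = 1 ∨ H' i j = -1) ∧
      (∀ i j, (m : ℤ) ∣ (H' * H'.transpose) i j - (b : ℤ) * (if i = j then 1 else 0)) := by
  subst h; exact ⟨H, h1, h2⟩

lemma key_step (m v N' : ℕ) (k l n : ℤ) (hv : 1 ≤ v)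
    (D : Matrix (Fin v) (Fin v) ℤ)
    (hDent : ∀ i j, D i j = 0 ∨ D i j = 1)
    (hDD : ∀ i j, (m : ℤ) ∣ (D * D.transpose) i j - ((k - l) * (if i = j then 1 else 0) + l))
    (hDrow : ∀ i, (m : ℤ) ∣ (∑ j, D i j) - k)
    (hv1 : (m : ℤ) ∣ (v : ℤ) - 1) (hk1 : (m : ℤ) ∣ k - 1)
    (hl : (m : ℤ) ∣ 4 * l - (4 - n))
    (hNn : (m : ℤ) ∣ ((N' + 1 : ℕ) : ℤ) - n)
    (H : Matrix (Fin (N'+1)) (Fin (N'+1)) ℤ)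
    (hent : ∀ i j, H i j = 1 ∨ H i j = -1)
    (hmod : ∀ i j, (m : ℤ) ∣ (H * H.transpose) i j - ((N' + 1 : ℕ) : ℤ) * (if i = j then 1 else 0)) :
    ∃ H' : Matrix (Fin (N' + v)) (Fin (N' + v)) ℤ,
      (∀ i j, H' i j = 1 ∨ H' i j = -1) ∧
      (∀ i j, (m : ℤ) ∣ (H' * H'.transpose) i j - ((N' + v : ℕ) : ℤ) * (if i = j then 1 else 0)) := by
  have sq : ∀ i j, H i j * H i j = 1 := by
    intro i j; rcases hent i j with h | h <;> rw [h] <;> norm_num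
  -- normalized matrix G
  obtain ⟨G, hGdef⟩ : ∃ G : Matrix (Fin (N'+1)) (Fin (N'+1)) ℤ,
      ∀ i j, G i j = H i 0 * H 0 0 * H 0 j * H i j := ⟨_, fun _ _ => rfl⟩
  have hGent : ∀ i j, G i j = 1 ∨ G i j = -1 := by
    intro i j
    rw [hGdef]
    rcases hent i 0 with h1 | h1 <;> rcases hent 0 0 with h2 | h2 <;>
      rcases hent 0 j with h3 | h3 <;> rcases hent i j with h4 | h4 <;>
      rw [h1, h2, h3, h4] <;> norm_num
  have hGnorm0 : ∀ t, G 0 t = 1 := by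
    intro t
    have h1 := sq 0 0
    have h2 := sq 0 t
    rw [hGdef]
    linear_combination (H 0 t * H 0 t) * h1 + h2
  have hGcol0 : ∀ t, G t 0 = 1 := by
    intro t
    have h1 := sq 0 0
    have h2 := sq t 0
    rw [hGdef]
    linear_combination (H t 0 * H t 0) * h1 + h2
  have hGgram : ∀ i j, (G * G.transpose) i j = H i 0 * H j 0 * ((H * H.transpose) i j) := by
    intro i j
    simp only [Matrix.mul_apply, Matrix.transpose_apply, Finset.mul_sum]
    refine Finset.sum_congr rfl fun t _ => ?_
    have h1 := sq 0 0
    have h2 := sq 0 t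
    rw [hGdef, hGdef]
    linear_combination (H i 0 * H j 0 * H i t * H j t * (H 0 t * H 0 t)) * h1 +
      (H i 0 * H j 0 * H i t * H j t) * h2
  have hGmod : ∀ i j, (m : ℤ) ∣ (G * G.transpose) i j - ((N' + 1 : ℕ) : ℤ) * (if i = j then 1 else 0) := by
    intro i j
    rw [hGgram]
    by_cases hij : i = j
    · subst hij
      rw [sq i 0, one_mul]
      exact hmod i i
    · have h := hmod i j
      rw [if_neg hij, mul_zero, sub_zero] at h ⊢
      exact h.mul_left _
  have hCsum : ∀ i : Fin N', (m : ℤ) ∣ (∑ a : Fin N', G i.succ a.succ) + 1 := by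
    intro i
    have h := hGmod i.succ 0
    rw [if_neg (Fin.succ_ne_zero i), mul_zero, sub_zero] at h
    have e : (G * G.transpose) i.succ 0 = 1 + ∑ a : Fin N', G i.succ a.succ := by
      simp only [Matrix.mul_apply, Matrix.transpose_apply, hGnorm0, mul_one]
      rw [Fin.sum_univ_succ, hGcol0]
    rw [e] at h
    have : (∑ a : Fin N', G i.succ a.succ) + 1 = 1 + ∑ a : Fin N', G i.succ a.succ := by ring
    rw [this]; exact h
  have hCC : ∀ i j : Fin N', (m : ℤ) ∣
      (1 + ∑ a : Fin N', G i.succ a.succ * G j.succ a.succ) -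
        ((N' + 1 : ℕ) : ℤ) * (if i = j then 1 else 0) := by
    intro i j
    have h := hGmod i.succ j.succ
    have e : (G * G.transpose) i.succ j.succ = 1 + ∑ a : Fin N', G i.succ a.succ * G j.succ a.succ := by
      simp only [Matrix.mul_apply, Matrix.transpose_apply]
      rw [Fin.sum_univ_succ, hGcol0, hGcol0, one_mul]
    rw [e] at h
    simp only [Fin.succ_inj] at h
    exact h
  -- block matrix
  obtain ⟨M, hM11, hM12, hM21, hM22⟩ :
      ∃ M : Matrix (Fin N' ⊕ Fin v) (Fin N' ⊕ Fin v) ℤ,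
        (∀ i j, M (.inl i) (.inl j) = G i.succ j.succ) ∧
        (∀ i j, M (.inl i) (.inr j) = -1) ∧
        (∀ i j, M (.inr i) (.inl j) = -1) ∧
        (∀ i j, M (.inr i) (.inr j) = 2 * D i j - 1) :=
    ⟨Matrix.fromBlocks (fun i j => G i.succ j.succ) (fun _ _ => -1) (fun _ _ => -1)
      (fun i j => 2 * D i j - 1), fun _ _ => rfl, fun _ _ => rfl, fun _ _ => rfl, fun _ _ => rfl⟩
  have hMent : ∀ x y, M x y = 1 ∨ M x y = -1 := by
    rintro (i | i) (j | j)
    · rw [hM11]; exact hGent _ _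
    · rw [hM12]; right; rfl
    · rw [hM21]; right; rfl
    · rw [hM22]; rcases hDent i j with h | h <;> rw [h] <;> [right; left] <;> ring
  have mulapply : ∀ x y, (M * M.transpose) x y =
      (∑ a : Fin N', M x (.inl a) * M y (.inl a)) +
      (∑ b : Fin v, M x (.inr b) * M y (.inr b)) := by
    intro x y
    simp only [Matrix.mul_apply, Matrix.transpose_apply, Fintype.sum_sum_type]
  have hsum1 : ∀ (j : Fin v), (∑ b : Fin v, (-1:ℤ) * (2 * D j b - 1)) = -2 * (∑ b, D j b) + v := by
    intro j
    rw [Finset.sum_congr rfl (fun b _ => (by ring : (-1:ℤ) * (2 * D j b - 1) = -2 * D j b + 1)),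
      Finset.sum_add_distrib]
    simp [← Finset.mul_sum]
  have hMgram : ∀ x y, (m : ℤ) ∣ (M * M.transpose) x y -
      ((N' + v : ℕ) : ℤ) * (if x = y then 1 else 0) := by
    rintro (i | i) (j | j)
    · -- inl inl
      rw [mulapply]
      simp only [hM11, hM12, Sum.inl.injEq]
      have e2 : (∑ b : Fin v, (-1:ℤ) * (-1)) = v := by simp
      rw [e2]
      by_cases hij : i = j
      · subst hij
        have h := hCC i i
        rw [if_pos rfl] at h ⊢
        obtain ⟨c, hc⟩ := h
        refine ⟨c, ?_⟩
        push_cast at hc ⊢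
        linarith
      · have h := hCC i j
        rw [if_neg hij] at h ⊢
        obtain ⟨c, hc⟩ := h
        obtain ⟨d, hd⟩ := hv1
        refine ⟨c + d, ?_⟩
        push_cast at hc hd ⊢
        linarith
    · -- inl inr
      rw [mulapply]
      simp only [hM11, hM12, hM21, hM22]
      rw [if_neg (by simp), mul_zero, sub_zero]
      have e1 : (∑ a : Fin N', G i.succ a.succ * (-1)) = -(∑ a : Fin N', G i.succ a.succ) := by
        simp
      rw [e1, hsum1 j]
      obtain ⟨c, hc⟩ := hCsum i
      obtain ⟨d, hd⟩ := hDrow j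
      obtain ⟨e, he⟩ := hk1
      obtain ⟨f, hf⟩ := hv1
      refine ⟨-c - 2*d - 2*e + f, ?_⟩
      push_cast at hc hd he hf ⊢
      linarith
    · -- inr inl
      rw [mulapply]
      simp only [hM11, hM12, hM21, hM22]
      rw [if_neg (by simp), mul_zero, sub_zero]
      have e1 : (∑ a : Fin N', (-1) * G j.succ a.succ) = -(∑ a : Fin N', G j.succ a.succ) := by
        simp
      have e2 : (∑ b : Fin v, (2 * D i b - 1) * (-1:ℤ)) = -2 * (∑ b, D i b) + v := by
        rw [← hsum1 i]
        exact Finset.sum_congr rfl fun b _ => by ring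
      rw [e1, e2]
      obtain ⟨c, hc⟩ := hCsum j
      obtain ⟨d, hd⟩ := hDrow i
      obtain ⟨e, he⟩ := hk1
      obtain ⟨f, hf⟩ := hv1
      refine ⟨-c - 2*d - 2*e + f, ?_⟩
      push_cast at hc hd he hf ⊢
      linarith
    · -- inr inr
      rw [mulapply]
      simp only [hM21, hM22, Sum.inr.injEq]
      have e1 : (∑ _a : Fin N', (-1:ℤ) * (-1)) = N' := by simp
      have e2 : (∑ b : Fin v, (2 * D i b - 1) * (2 * D j b - 1)) =
          4 * ((D * D.transpose) i j) - 2 * (∑ b, D i b) - 2 * (∑ b, D j b) + v := by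
        simp only [Matrix.mul_apply, Matrix.transpose_apply, Finset.mul_sum]
        rw [Finset.sum_congr rfl (fun b _ => (by ring :
          (2 * D i b - 1) * (2 * D j b - 1) = (4 * (D i b * D j b) + (-2) * D i b) + ((-2) * D j b + 1))),
          Finset.sum_add_distrib, Finset.sum_add_distrib, Finset.sum_add_distrib]
        simp [← Finset.mul_sum]
        ring
      rw [e1, e2]
      obtain ⟨c1, hc1⟩ := hDD i j
      obtain ⟨c2, hc2⟩ := hDrow i
      obtain ⟨c3, hc3⟩ := hDrow j
      obtain ⟨c4, hc4⟩ := hNn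
      obtain ⟨c5, hc5⟩ := hv1
      obtain ⟨c6, hc6⟩ := hk1
      obtain ⟨c7, hc7⟩ := hl
      by_cases hij : i = j
      · subst hij
        rw [if_pos rfl] at hc1 ⊢
        refine ⟨4*c1 - 2*c2 - 2*c3, ?_⟩
        push_cast at hc1 hc2 hc3 ⊢
        linarith
      · rw [if_neg hij] at hc1 ⊢
        refine ⟨4*c1 - 2*c2 - 2*c3 + c4 + c5 + c7 - 4*c6, ?_⟩
        push_cast at hc1 hc2 hc3 hc4 hc5 hc6 hc7 ⊢
        linarith
  -- reindex to Fin (N' + v)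
  refine ⟨M.submatrix finSumFinEquiv.symm finSumFinEquiv.symm, fun i j => hMent _ _, fun i j => ?_⟩
  have hprod : (M.submatrix finSumFinEquiv.symm finSumFinEquiv.symm) *
      (M.submatrix finSumFinEquiv.symm finSumFinEquiv.symm).transpose =
      (M * M.transpose).submatrix finSumFinEquiv.symm finSumFinEquiv.symm := by
    rw [Matrix.transpose_submatrix, Matrix.submatrix_mul_equiv]
  rw [hprod]
  have h := hMgram (finSumFinEquiv.symm i) (finSumFinEquiv.symm j)
  simpa [Matrix.submatrix_apply, Equiv.apply_eq_iff_eq] using h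

theorem stmt_9 (n m v : ℕ) (k l : ℤ) (hm_odd : Odd m) (hm : 3 ≤ m) (hn : 3 ≤ n)
    (hgcd : Nat.gcd n m = 1) (hv : 2 ≤ v)
    (H : Matrix (Fin n) (Fin n) ℤ)
    (hent : ∀ i j, H i j = 1 ∨ H i j = -1)
    (hmod : ∀ i j, (m : ℤ) ∣ (H * H.transpose) i j - n * (if i = j then 1 else 0))
    (D : Matrix (Fin v) (Fin v) ℤ)
    (hDent : ∀ i j, D i j = 0 ∨ D i j = 1)
    (hDD : ∀ i j, (m : ℤ) ∣ (D * D.transpose) i j -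
      ((k - l) * (if i = j then 1 else 0) + l))
    (hDrow : ∀ i, (m : ℤ) ∣ (∑ j, D i j) - k)
    (hDcol : ∀ j, (m : ℤ) ∣ (∑ i, D i j) - k)
    (hv1 : (m : ℤ) ∣ (v : ℤ) - 1)
    (hk1 : (m : ℤ) ∣ k - 1)
    (hl : (m : ℤ) ∣ 4 * l - (4 - n)) :
    ∀ L : ℕ, ∃ H' : Matrix (Fin (n + L * (v - 1))) (Fin (n + L * (v - 1))) ℤ,
      (∀ i j, H' i j = 1 ∨ H' i j = -1) ∧
      (∀ i j, (m : ℤ) ∣ (H' * H'.transpose) i j -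
        (n + L * (v - 1) : ℕ) * (if i = j then 1 else 0)) := by
  intro L
  induction L with
  | zero => exact transport_MH m n _ (by simp) H hent hmod
  | succ L ih =>
    obtain ⟨H', h1, h2⟩ := ih
    have hS3 : 3 ≤ n + L * (v - 1) := le_trans hn (Nat.le_add_right _ _)
    obtain ⟨N', hS⟩ : ∃ N', n + L * (v - 1) = N' + 1 := ⟨n + L * (v - 1) - 1, by omega⟩
    obtain ⟨H'', h1', h2'⟩ := transport_MH m _ (N' + 1) hS H' h1 h2
    have hNn : (m : ℤ) ∣ ((N' + 1 : ℕ) : ℤ) - (n : ℤ) := by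
      have hcast : ((N' + 1 : ℕ) : ℤ) - (n : ℤ) = (L : ℤ) * ((v : ℤ) - 1) := by
        rw [← hS]
        push_cast [Nat.cast_sub (show 1 ≤ v by omega)]
        ring
      rw [hcast]
      exact hv1.mul_left L
    obtain ⟨H3, h13, h23⟩ := key_step m v N' k l n (by omega) D hDent hDD hDrow hv1 hk1 hl hNn
      H'' h1' h2'
    have heq : N' + v = n + (L + 1) * (v - 1) := by
      have hm1 : (L + 1) * (v - 1) = L * (v - 1) + (v - 1) := by ring
      omega
    exact transport_MH m _ _ heq H3 h13 h23
end

section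
/- Let m be odd, let n be odd with gcd(n,m) = 1 and n < 3m, and suppose H is an m-modular Hadamard matrix of size n. Then for any two distinct rows i, j of H, the inner product of rows i and j equals m or -m. -/
theorem stmt_13 (n m : ℕ) (hm_odd : Odd m) (hn_odd : Odd n)
    (hgcd : Nat.gcd n m = 1) (hnm : n < 3 * m)
    (H : Matrix (Fin n) (Fin n) ℤ)
    (hent : ∀ i j, H i j = 1 ∨ H i j = -1)
    (hmod : ∀ i j, (m : ℤ) ∣ (H * H.transpose) i j - n * (if i = j then 1 else 0)) :
    ∀ i j, i ≠ j → (∑ t, H i t * H j t) = (m : ℤ) ∨ (∑ t, H i t * H j t) = -(m : ℤ) := by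
  intro i j hij
  set S : ℤ := ∑ t, H i t * H j t with hS
  -- divisibility
  have hdvd : (m : ℤ) ∣ S := by
    have := hmod i j
    simpa [Matrix.mul_apply, Matrix.transpose_apply, hij, hS] using this
  -- S is odd
  have hSodd : Odd S := by
    rcases Int.even_or_odd S with he | ho
    · exfalso
      have h2 : ((S : ZMod 2)) = 0 := by
        have : (2 : ℤ) ∣ S := he.two_dvd
        exact (ZMod.intCast_zmod_eq_zero_iff_dvd S 2).mpr (by exact_mod_cast this)
      have h1 : ((S : ZMod 2)) = 1 := by
        rw [hS]
        push_cast
        have : ∀ t : Fin n, ((H i t : ZMod 2)) * ((H j t : ZMod 2)) = 1 := by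
          intro t
          rcases hent i t with h | h <;> rcases hent j t with h' | h' <;>
            simp [h, h'] <;> decide
        rw [Finset.sum_congr rfl fun t _ => this t, Finset.sum_const]
        simp only [Finset.card_univ, Fintype.card_fin, nsmul_eq_mul, mul_one]
        rw [← ZMod.natCast_mod n 2, Nat.odd_iff.mp hn_odd]; rfl
      rw [h2] at h1; exact absurd h1 (by decide)
    · exact ho
  -- bound
  have hbound : |S| ≤ (n : ℤ) := by
    calc |S| ≤ ∑ t, |H i t * H j t| := Finset.abs_sum_le_sum_abs _ _
    _ = ∑ t : Fin n, 1 := by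
        apply Finset.sum_congr rfl
        intro t _
        rcases hent i t with h | h <;> rcases hent j t with h' | h' <;> simp [h, h']
    _ = (n : ℤ) := by simp
  obtain ⟨k, hk⟩ := hdvd
  have hm_pos : (0 : ℤ) < m := by
    rcases hm_odd with ⟨c, hc⟩; omega
  have hkodd : Odd k := by
    rcases Int.even_or_odd k with ⟨c, hc⟩ | ho
    · exfalso
      have hev : Even S := ⟨(m : ℤ) * c, by rw [hk, hc]; ring⟩
      exact (Int.not_odd_iff_even.mpr hev) hSodd
    · exact ho
  have hkabs : |k| < 3 := by
    have : |S| = (m : ℤ) * |k| := by rw [hk, abs_mul, abs_of_pos hm_pos]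
    have hn3 : (n : ℤ) < 3 * m := by exact_mod_cast hnm
    nlinarith [abs_nonneg k]
  have hk0 : k ≠ 0 := by
    intro h; rw [h, mul_zero] at hk
    rcases hSodd with ⟨d, hd⟩; omega
  rcases hkodd with ⟨c, hc⟩
  have : k = 1 ∨ k = -1 := by
    rcases abs_lt.mp hkabs with ⟨h1, h2⟩; omega
  rcases this with h | h
  · left; rw [hk, h, mul_one]
  · right; rw [hk, h]; ring
end

section
/- There is no 7-modular Hadamard matrix of size 15; that is, there is no 15×15 matrix H with entries ±1 such that every entry of H Hᵀ - 15·I is divisible by 7. -/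
open Finset in
private lemma dot_card (f g : Fin 15 → ℤ) (hf : ∀ j, f j = 1 ∨ f j = -1)
    (hg : ∀ j, g j = 1 ∨ g j = -1) :
    ∑ j, f j * g j = 15 - 2 * ((univ.filter (fun j => f j ≠ g j)).card : ℤ) := by
  have h : ∀ j : Fin 15, f j * g j = 1 - 2 * (if f j ≠ g j then (1:ℤ) else 0) := by
    intro j
    rcases hf j with h1 | h1 <;> rcases hg j with h2 | h2 <;> rw [h1, h2] <;> norm_num
  calc ∑ j, f j * g j = ∑ _j : Fin 15, (1:ℤ) - 2 * ∑ j : Fin 15, (if f j ≠ g j then (1:ℤ) else 0) := by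
        rw [Finset.mul_sum, ← Finset.sum_sub_distrib]
        exact Finset.sum_congr rfl (fun j _ => h j)
    _ = 15 - 2 * ((univ.filter (fun j => f j ≠ g j)).card : ℤ) := by
        rw [Finset.sum_boole]
        simp

open Finset in
private lemma pair_of_card_two {s : Finset (Fin 15)} {p : Fin 15} (h2 : s.card = 2) (hp : p ∈ s) :
    ∃ y, y ≠ p ∧ s = {p, y} := by
  obtain ⟨a, b, hab, rfl⟩ := Finset.card_eq_two.mp h2
  simp only [mem_insert, mem_singleton] at hp
  rcases hp with rfl | rfl
  · exact ⟨b, hab.symm, rfl⟩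
  · exact ⟨a, hab, by rw [Finset.pair_comm]⟩

open Finset in
private lemma key (A : Fin 15 → Finset (Fin 15)) (F : Finset (Fin 15)) (p : Fin 15)
    (hF : 8 ≤ F.card)
    (hmem : ∀ i ∈ F, p ∈ A i)
    (h4 : ∀ i ∈ F, (A i).card = 4)
    (h2 : ∀ i ∈ F, ∀ k ∈ F, i ≠ k → (A i ∩ A k).card = 2) : False := by
  classical
  obtain ⟨i₀, hi₀F⟩ : F.Nonempty := Finset.card_pos.mp (by omega)
  have pair : ∀ i ∈ F, ∀ k ∈ F, i ≠ k → ∃ y, y ≠ p ∧ A i ∩ A k = {p, y} := by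
    intro i hi k hk hik
    exact pair_of_card_two (h2 i hi k hk hik) (Finset.mem_inter.mpr ⟨hmem i hi, hmem k hk⟩)
  set φ : Fin 15 → Fin 15 := fun i =>
    if h : ∃ y, y ≠ p ∧ A i ∩ A i₀ = {p, y} then h.choose else p with hφ
  have hφspec : ∀ i ∈ F.erase i₀, φ i ≠ p ∧ A i ∩ A i₀ = {p, φ i} := by
    intro i hi
    have hex := pair i (mem_of_mem_erase hi) i₀ hi₀F (ne_of_mem_erase hi)
    have : φ i = hex.choose := by rw [hφ]; simp only [dif_pos hex]
    rw [this]
    exact hex.choose_spec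
  have hmapsto : ∀ i ∈ F.erase i₀, φ i ∈ (A i₀).erase p := by
    intro i hi
    obtain ⟨hne, heq⟩ := hφspec i hi
    refine Finset.mem_erase.mpr ⟨hne, ?_⟩
    have h1 : φ i ∈ A i ∩ A i₀ := by rw [heq]; simp
    exact (Finset.mem_inter.mp h1).2
  have hcard3 : ((A i₀).erase p).card = 3 := by
    rw [Finset.card_erase_of_mem (hmem i₀ hi₀F), h4 i₀ hi₀F]
  have hcard7 : 7 ≤ (F.erase i₀).card := by
    rw [Finset.card_erase_of_mem hi₀F]; omega
  obtain ⟨x, hx, hfib⟩ :=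
    Finset.exists_lt_card_fiber_of_mul_lt_card_of_maps_to hmapsto
      (by rw [hcard3]; omega : ((A i₀).erase p).card * 2 < (F.erase i₀).card)
  obtain ⟨T, hTsub, hTcard⟩ := Finset.exists_subset_card_eq hfib
  obtain ⟨i₁, i₂, i₃, h12, h13, h23, rfl⟩ := Finset.card_eq_three.mp hTcard
  have hxp : x ≠ p := Finset.ne_of_mem_erase hx
  have hxi₀ : x ∈ A i₀ := Finset.mem_of_mem_erase hx
  -- facts about i₁ i₂ i₃
  have hspec : ∀ i ∈ ({i₁, i₂, i₃} : Finset (Fin 15)), i ∈ F ∧ i ≠ i₀ ∧ A i ∩ A i₀ = {p, x} := by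
    intro i hi
    have h1 := hTsub hi
    have h2' := Finset.mem_filter.mp h1
    have h3 := hφspec i h2'.1
    refine ⟨Finset.mem_of_mem_erase h2'.1, Finset.ne_of_mem_erase h2'.1, ?_⟩
    rw [← h2'.2]; exact h3.2
  have hxmem : ∀ i ∈ ({i₁, i₂, i₃} : Finset (Fin 15)), x ∈ A i := by
    intro i hi
    have h1 : x ∈ A i ∩ A i₀ := by rw [(hspec i hi).2.2]; simp
    exact (Finset.mem_inter.mp h1).1
  -- general: two distinct blocks both containing x intersect exactly in {p, x}
  have hpx : ∀ i ∈ F, ∀ k ∈ F, i ≠ k → x ∈ A i → x ∈ A k → A i ∩ A k = {p, x} := by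
    intro i hi k hk hik hxi hxk
    have hsub : ({p, x} : Finset (Fin 15)) ⊆ A i ∩ A k := by
      intro z hz
      simp only [mem_insert, mem_singleton] at hz
      rcases hz with rfl | rfl
      · exact Finset.mem_inter.mpr ⟨hmem i hi, hmem k hk⟩
      · exact Finset.mem_inter.mpr ⟨hxi, hxk⟩
    have hc : ({p, x} : Finset (Fin 15)).card = 2 := by
      rw [Finset.card_insert_of_notMem (by simpa using hxp.symm), Finset.card_singleton]
    exact (Finset.eq_of_subset_of_card_le hsub (by rw [h2 i hi k hk hik, hc])).symm
  by_cases hall : ∀ k ∈ F, x ∈ A k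
  · -- Case 2: all blocks contain x; petals are disjoint 2-sets, too many points
    set B : Fin 15 → Finset (Fin 15) := fun k => ((A k).erase p).erase x with hB
    have hBcard : ∀ k ∈ F, (B k).card = 2 := by
      intro k hk
      rw [hB]
      have hx1 : x ∈ (A k).erase p := Finset.mem_erase.mpr ⟨hxp, hall k hk⟩
      rw [Finset.card_erase_of_mem hx1, Finset.card_erase_of_mem (hmem k hk), h4 k hk]
    have hdisj : ∀ k ∈ F, ∀ l ∈ F, k ≠ l → Disjoint (B k) (B l) := by
      intro k hk l hl hkl
      rw [Finset.disjoint_left]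
      intro z hzk hzl
      have hz1 : z ∈ A k ∩ A l := by
        refine Finset.mem_inter.mpr ⟨?_, ?_⟩
        · exact Finset.mem_of_mem_erase (Finset.mem_of_mem_erase hzk)
        · exact Finset.mem_of_mem_erase (Finset.mem_of_mem_erase hzl)
      rw [hpx k hk l hl hkl (hall k hk) (hall l hl)] at hz1
      simp only [mem_insert, mem_singleton] at hz1
      rcases hz1 with rfl | rfl
      · exact (Finset.mem_erase.mp (Finset.mem_of_mem_erase hzk)).1 rfl
      · exact (Finset.mem_erase.mp hzk).1 rfl
    have hbig : (F.biUnion B).card = ∑ k ∈ F, (B k).card := Finset.card_biUnion hdisj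
    have hsum : ∑ k ∈ F, (B k).card = 2 * F.card := by
      rw [Finset.sum_congr rfl hBcard]; simp [mul_comm]
    have hle : (F.biUnion B).card ≤ 15 := by
      have := Finset.card_le_univ (F.biUnion B)
      simpa using this
    omega
  · -- Case 1: some block k misses x; it must contain 5 distinct points
    push_neg at hall
    obtain ⟨k, hkF, hxk⟩ := hall
    have hki : ∀ i ∈ ({i₁, i₂, i₃} : Finset (Fin 15)), k ≠ i := by
      intro i hi h
      exact hxk (h ▸ hxmem i hi)
    have hki₀ : k ≠ i₀ := fun h => hxk (h ▸ hxi₀)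
    -- the 4 y's
    have gety : ∀ i ∈ F, k ≠ i → ∃ y, y ≠ p ∧ y ≠ x ∧ y ∈ A k ∧ y ∈ A i ∧ A k ∩ A i = {p, y} := by
      intro i hi hne
      obtain ⟨y, hy1, hy2⟩ := pair k hkF i hi hne
      have hy3 : y ∈ A k ∩ A i := by rw [hy2]; simp
      obtain ⟨hyk, hyi⟩ := Finset.mem_inter.mp hy3
      exact ⟨y, hy1, fun h => hxk (h ▸ hyk), hyk, hyi, hy2⟩
    obtain ⟨y₀, hy₀p, hy₀x, hy₀k, hy₀i, _⟩ := gety i₀ hi₀F hki₀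
    obtain ⟨y₁, hy₁p, hy₁x, hy₁k, hy₁i, _⟩ := gety i₁ (hspec i₁ (by simp)).1 (hki i₁ (by simp))
    obtain ⟨y₂, hy₂p, hy₂x, hy₂k, hy₂i, _⟩ := gety i₂ (hspec i₂ (by simp)).1 (hki i₂ (by simp))
    obtain ⟨y₃, hy₃p, hy₃x, hy₃k, hy₃i, _⟩ := gety i₃ (hspec i₃ (by simp)).1 (hki i₃ (by simp))
    -- distinctness of the y's
    have hdist : ∀ (a b : Fin 15) (ia ib : Fin 15), ia ∈ F → ib ∈ F → ia ≠ ib →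
        x ∈ A ia → x ∈ A ib → a ∈ A ia → b ∈ A ib → a ≠ p → a ≠ x → a ≠ b → True := fun _ _ _ _ _ _ _ _ _ _ _ _ _ _ => trivial
    have key2 : ∀ (a : Fin 15) (ia ib : Fin 15), ia ∈ F → ib ∈ F → ia ≠ ib →
        x ∈ A ia → x ∈ A ib → a ∈ A ia → a ∈ A ib → a ≠ p → a ≠ x → False := by
      intro a ia ib hia hib hne hxa hxb ha hb hap hax
      have : a ∈ A ia ∩ A ib := Finset.mem_inter.mpr ⟨ha, hb⟩
      rw [hpx ia hia ib hib hne hxa hxb] at this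
      simp only [mem_insert, mem_singleton] at this
      rcases this with h | h
      · exact hap h
      · exact hax h
    have hF₁ := (hspec i₁ (by simp)).1
    have hF₂ := (hspec i₂ (by simp)).1
    have hF₃ := (hspec i₃ (by simp)).1
    have hx₁ := hxmem i₁ (by simp)
    have hx₂ := hxmem i₂ (by simp)
    have hx₃ := hxmem i₃ (by simp)
    have hne₀₁ : i₀ ≠ i₁ := fun h => (hspec i₁ (by simp)).2.1 h.symm
    have hne₀₂ : i₀ ≠ i₂ := fun h => (hspec i₂ (by simp)).2.1 h.symm
    have hne₀₃ : i₀ ≠ i₃ := fun h => (hspec i₃ (by simp)).2.1 h.symm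
    have d01 : y₀ ≠ y₁ := fun h => key2 y₀ i₀ i₁ hi₀F hF₁ hne₀₁ hxi₀ hx₁ hy₀i (h ▸ hy₁i) hy₀p hy₀x
    have d02 : y₀ ≠ y₂ := fun h => key2 y₀ i₀ i₂ hi₀F hF₂ hne₀₂ hxi₀ hx₂ hy₀i (h ▸ hy₂i) hy₀p hy₀x
    have d03 : y₀ ≠ y₃ := fun h => key2 y₀ i₀ i₃ hi₀F hF₃ hne₀₃ hxi₀ hx₃ hy₀i (h ▸ hy₃i) hy₀p hy₀x
    have d12 : y₁ ≠ y₂ := fun h => key2 y₁ i₁ i₂ hF₁ hF₂ h12 hx₁ hx₂ hy₁i (h ▸ hy₂i) hy₁p hy₁x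
    have d13 : y₁ ≠ y₃ := fun h => key2 y₁ i₁ i₃ hF₁ hF₃ h13 hx₁ hx₃ hy₁i (h ▸ hy₃i) hy₁p hy₁x
    have d23 : y₂ ≠ y₃ := fun h => key2 y₂ i₂ i₃ hF₂ hF₃ h23 hx₂ hx₃ hy₂i (h ▸ hy₃i) hy₂p hy₂x
    have hsub : ({p, y₀, y₁, y₂, y₃} : Finset (Fin 15)) ⊆ A k := by
      intro z hz
      simp only [mem_insert, mem_singleton] at hz
      rcases hz with rfl | rfl | rfl | rfl | rfl
      · exact hmem k hkF
      · exact hy₀k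
      · exact hy₁k
      · exact hy₂k
      · exact hy₃k
    have hc5 : ({p, y₀, y₁, y₂, y₃} : Finset (Fin 15)).card = 5 := by
      rw [Finset.card_insert_of_notMem (by simp [hy₀p.symm, hy₁p.symm, hy₂p.symm, hy₃p.symm] : p ∉ ({y₀,y₁,y₂,y₃} : Finset (Fin 15))),
          Finset.card_insert_of_notMem (by simp [d01, d02, d03]),
          Finset.card_insert_of_notMem (by simp [d12, d13]),
          Finset.card_insert_of_notMem (by simp [d23]),
          Finset.card_singleton]
    have := Finset.card_le_card hsub
    rw [hc5, h4 k hkF] at this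
    omega

open Finset in
theorem stmt_15 :
    ¬ ∃ H : Matrix (Fin 15) (Fin 15) ℤ,
      (∀ i j, H i j = 1 ∨ H i j = -1) ∧
      (∀ i j, (7 : ℤ) ∣ (H * H.transpose) i j - 15 * (if i = j then 1 else 0)) := by
  rintro ⟨H, h1, h7⟩
  -- dot products of distinct rows of H are ±7
  have hdot : ∀ i k : Fin 15, i ≠ k →
      (∑ j, H i j * H k j) = 7 ∨ (∑ j, H i j * H k j) = -7 := by
    intro i k hik
    have hd := h7 i k
    rw [Matrix.mul_apply] at hd
    simp only [Matrix.transpose_apply, if_neg hik, mul_zero, sub_zero] at hd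
    have hcd := dot_card (H i) (H k) (h1 i) (h1 k)
    set c := (univ.filter (fun j => H i j ≠ H k j)).card with hc
    have hcle : c ≤ 15 := le_trans (Finset.card_filter_le _ _) (by simp)
    obtain ⟨t, ht⟩ := hd
    rw [hcd] at ht
    have hcle' : (c : ℤ) ≤ 15 := by exact_mod_cast hcle
    have hcge : (0 : ℤ) ≤ (c : ℤ) := Int.natCast_nonneg c
    rw [hcd]
    omega
  -- the sign-normalization
  set e : Fin 15 → ℤ := fun i => if (∑ j, H i j * H 0 j) < 0 then -1 else 1 with he
  set K : Fin 15 → Fin 15 → ℤ := fun i j => e i * (H i j * H 0 j) with hK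
  have hepm : ∀ i, e i = 1 ∨ e i = -1 := by
    intro i; rw [he]; dsimp only; split <;> simp
  have hK1 : ∀ i j, K i j = 1 ∨ K i j = -1 := by
    intro i j
    rcases hepm i with h2 | h2 <;> rcases h1 i j with h3 | h3 <;> rcases h1 0 j with h4 | h4 <;>
      rw [hK] <;> dsimp only <;> rw [h2, h3, h4] <;> norm_num
  have hKdot : ∀ i k : Fin 15, ∑ j, K i j * K k j = e i * e k * ∑ j, H i j * H k j := by
    intro i k
    rw [Finset.mul_sum]
    refine Finset.sum_congr rfl (fun j _ => ?_)
    rcases h1 0 j with h4 | h4 <;> rw [hK] <;> dsimp only <;> rw [h4] <;> ring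
  have hK0 : ∀ j, K 0 j = 1 := by
    intro j
    have he0 : e 0 = 1 := by
      rw [he]; dsimp only
      rw [if_neg]
      push_neg
      refine Finset.sum_nonneg (fun j _ => ?_)
      rcases h1 0 j with h4 | h4 <;> rw [h4] <;> norm_num
    rcases h1 0 j with h4 | h4 <;> rw [hK] <;> dsimp only <;> rw [he0, h4] <;> norm_num
  have hKrow : ∀ i : Fin 15, i ≠ 0 → ∑ j, K i j = 7 := by
    intro i hi
    have h2 : ∑ j, K i j = ∑ j, K i j * K 0 j := by
      refine Finset.sum_congr rfl (fun j _ => ?_)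
      rw [hK0 j, mul_one]
    rw [h2, hKdot]
    have he0 : e 0 = 1 := by
      rw [he]; dsimp only
      rw [if_neg]
      push_neg
      refine Finset.sum_nonneg (fun j _ => ?_)
      rcases h1 0 j with h4 | h4 <;> rw [h4] <;> norm_num
    rw [he0, mul_one]
    rcases hdot i 0 hi with h5 | h5 <;> rw [he] <;> dsimp only <;> rw [h5] <;> norm_num
  have hKpair : ∀ i k : Fin 15, i ≠ k →
      (∑ j, K i j * K k j) = 7 ∨ (∑ j, K i j * K k j) = -7 := by
    intro i k hik
    rw [hKdot]
    rcases hepm i with h2 | h2 <;> rcases hepm k with h3 | h3 <;> rw [h2, h3] <;>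
      rcases hdot i k hik with h5 | h5 <;> rw [h5] <;> norm_num
  -- blocks
  set A : Fin 15 → Finset (Fin 15) := fun i => univ.filter (fun j => K i j = -1) with hA
  have hA4 : ∀ i : Fin 15, i ≠ 0 → (A i).card = 4 := by
    intro i hi
    have hone : ∀ j : Fin 15, (fun _ : Fin 15 => (1:ℤ)) j = 1 ∨ (fun _ : Fin 15 => (1:ℤ)) j = -1 :=
      fun j => Or.inl rfl
    have hcd := dot_card (K i) (fun _ => 1) (hK1 i) hone
    simp only [mul_one] at hcd
    rw [hKrow i hi] at hcd
    have hfe : (univ.filter (fun j => K i j ≠ (1:ℤ))) = A i := by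
      rw [hA]
      refine Finset.filter_congr (fun j _ => ?_)
      rcases hK1 i j with h2 | h2 <;> rw [h2] <;> norm_num
    rw [hfe] at hcd
    omega
  have hA2 : ∀ i k : Fin 15, i ≠ 0 → k ≠ 0 → i ≠ k → (A i ∩ A k).card = 2 := by
    intro i k hi hk hik
    have hcd := dot_card (K i) (K k) (hK1 i) (hK1 k)
    have hD : (univ.filter (fun j => K i j ≠ K k j)) = (A i \ A k) ∪ (A k \ A i) := by
      ext j
      simp only [Finset.mem_filter, Finset.mem_union, Finset.mem_sdiff, hA, Finset.mem_univ,
        true_and]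
      rcases hK1 i j with h2 | h2 <;> rcases hK1 k j with h3 | h3 <;> rw [h2, h3] <;> norm_num
    have hdisj : Disjoint (A i \ A k) (A k \ A i) := disjoint_sdiff_sdiff
    have hcardD : (univ.filter (fun j => K i j ≠ K k j)).card
        = (A i \ A k).card + (A k \ A i).card := by
      rw [hD, Finset.card_union_of_disjoint hdisj]
    have hik' : (A i \ A k).card + (A i ∩ A k).card = (A i).card :=
      Finset.card_sdiff_add_card_inter _ _
    have hki' : (A k \ A i).card + (A k ∩ A i).card = (A k).card :=
      Finset.card_sdiff_add_card_inter _ _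
    rw [Finset.inter_comm] at hki'
    rw [hA4 i hi] at hik'
    rw [hA4 k hk] at hki'
    rcases hKpair i k hik with h5 | h5 <;> rw [h5] at hcd <;>
    · rw [hcardD] at hcd
      omega
  -- double counting: Σ_{p ∈ A 1} r p = 30
  set S : Finset (Fin 15) := univ.erase 0 with hS
  set r : Fin 15 → ℕ := fun p => (S.filter (fun i => p ∈ A i)).card with hr
  have h1ne0 : (1 : Fin 15) ≠ 0 := by decide
  have h1S : (1 : Fin 15) ∈ S := by rw [hS]; exact Finset.mem_erase.mpr ⟨h1ne0, Finset.mem_univ _⟩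
  have hSmem : ∀ i ∈ S, i ≠ (0 : Fin 15) := fun i hi => Finset.ne_of_mem_erase hi
  have hsum30 : ∑ p ∈ A 1, r p = 30 := by
    have hswap : ∑ p ∈ A 1, r p = ∑ i ∈ S, ((A 1).filter (fun p => p ∈ A i)).card := by
      simp only [hr, Finset.card_filter]
      exact Finset.sum_comm
    rw [hswap]
    have hterm : ∀ i ∈ S, ((A 1).filter (fun p => p ∈ A i)).card = (A 1 ∩ A i).card := by
      intro i _
      rw [Finset.filter_mem_eq_inter]
    rw [Finset.sum_congr rfl hterm]
    rw [← Finset.sum_erase_add S _ h1S]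
    have hfix : (A 1 ∩ A 1).card = 4 := by rw [Finset.inter_self]; exact hA4 1 h1ne0
    have hoth : ∀ i ∈ S.erase 1, (A 1 ∩ A i).card = 2 := by
      intro i hi
      exact hA2 1 i h1ne0 (hSmem i (Finset.mem_of_mem_erase hi)) (Finset.ne_of_mem_erase hi).symm
    rw [Finset.sum_congr rfl hoth, Finset.sum_const, hfix]
    have hsc : (S.erase 1).card = 13 := by
      rw [Finset.card_erase_of_mem h1S, hS, Finset.card_erase_of_mem (Finset.mem_univ _)]
      simp
    rw [hsc]
    norm_num
  -- find a point in ≥ 8 blocks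
  have hex : ∃ p ∈ A 1, 8 ≤ r p := by
    by_contra hcon
    push_neg at hcon
    have hle : ∑ p ∈ A 1, r p ≤ (A 1).card * 7 :=
      Finset.sum_le_card_nsmul _ _ 7 (fun p hp => by
        have := hcon p hp; omega)
    rw [hA4 1 h1ne0, hsum30] at hle
    omega
  obtain ⟨p, _, hp8⟩ := hex
  set F : Finset (Fin 15) := S.filter (fun i => p ∈ A i) with hF
  have hFcard : 8 ≤ F.card := hp8
  exact key A F p hFcard
    (fun i hi => (Finset.mem_filter.mp hi).2)
    (fun i hi => hA4 i (hSmem i (Finset.mem_filter.mp hi).1))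
    (fun i hi k hk hik => hA2 i k (hSmem i (Finset.mem_filter.mp hi).1)
      (hSmem k (Finset.mem_filter.mp hk).1) hik)
end

section
/- For every n ≥ 3 with n ≡ 8 (mod 12), a 12-modular Hadamard matrix of size n exists. -/
lemma sumA {m : ℕ} (a e : Fin m) :
    (∑ c : Fin m, (if a = c then (-1:ℤ) else 1) * (if e = c then (-1:ℤ) else 1))
      = if a = e then (m:ℤ) else (m:ℤ) - 4 := by
  by_cases h : a = e
  · subst h
    simp only [if_pos rfl]
    have : ∀ c : Fin m, (if a = c then (-1:ℤ) else 1) * (if a = c then (-1:ℤ) else 1) = 1 := by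
      intro c; split_ifs <;> norm_num
    rw [Finset.sum_congr rfl (fun c _ => this c)]
    simp
  · rw [if_neg h]
    have : ∀ c : Fin m, (if a = c then (-1:ℤ) else 1) * (if e = c then (-1:ℤ) else 1)
        = 1 - 2 * (if a = c then (1:ℤ) else 0) - 2 * (if e = c then (1:ℤ) else 0) := by
      intro c
      split_ifs with h1 h2 h2 <;> first
        | (exact absurd (h1.trans h2.symm) h)
        | norm_num
    rw [Finset.sum_congr rfl (fun c _ => this c)]
    rw [Finset.sum_sub_distrib, Finset.sum_sub_distrib, ← Finset.mul_sum, ← Finset.mul_sum]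
    simp [Finset.sum_ite_eq]
    ring

lemma sumA' {m : ℕ} (a b : ℕ) (ha : a < m) (hb : b < m) :
    (∑ c : Fin m, (if a = (c:ℕ) then (-1:ℤ) else 1) * (if b = (c:ℕ) then (-1:ℤ) else 1))
      = if a = b then (m:ℤ) else (m:ℤ) - 4 := by
  have h1 : ∀ c : Fin m, (a = (c:ℕ)) ↔ ((⟨a, ha⟩ : Fin m) = c) := by
    intro c; simp [Fin.ext_iff]
  have h2 : ∀ c : Fin m, (b = (c:ℕ)) ↔ ((⟨b, hb⟩ : Fin m) = c) := by
    intro c; simp [Fin.ext_iff]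
  simp only [h1, h2]
  rw [sumA]
  congr 1
  simp [Fin.ext_iff]

lemma sumF (b f : ℕ) (hb : b < 2) (hf : f < 2) :
    (∑ d : Fin 2, (if b = 1 ∧ (d:ℕ) = 1 then (-1:ℤ) else 1) *
        (if f = 1 ∧ (d:ℕ) = 1 then (-1:ℤ) else 1)) = if b = f then 2 else 0 := by
  interval_cases b <;> interval_cases f <;> simp [Fin.sum_univ_two]

theorem stmt_16 (n : ℕ) (hn : 3 ≤ n) (hmod : n % 12 = 8) :
    ∃ H : Matrix (Fin n) (Fin n) ℤ,
      (∀ i j, H i j = 1 ∨ H i j = -1) ∧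
      (∀ i j, (12 : ℤ) ∣ (H * H.transpose) i j - n * (if i = j then 1 else 0)) := by
  obtain ⟨k, hk⟩ : ∃ k, n = 12 * k + 8 := ⟨n / 12, by omega⟩
  set m : ℕ := 6 * k + 4 with hm
  have hnm : n = m * 2 := by omega
  set H : Matrix (Fin n) (Fin n) ℤ := fun i j =>
      (if (i:ℕ)/2 = (j:ℕ)/2 then -1 else 1) *
      (if (i:ℕ)%2 = 1 ∧ (j:ℕ)%2 = 1 then -1 else 1) with hH
  refine ⟨H, ?_, ?_⟩
  · intro i j
    simp only [hH]
    split_ifs <;> norm_num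
  · intro i j
    let e : Fin m × Fin 2 ≃ Fin n := finProdFinEquiv.trans (finCongr hnm.symm)
    have he : ∀ p : Fin m × Fin 2, ((e p : Fin n) : ℕ) = (p.2 : ℕ) + 2 * (p.1 : ℕ) := by
      intro p; rfl
    have hediv : ∀ p : Fin m × Fin 2, ((e p : Fin n) : ℕ) / 2 = (p.1 : ℕ) := by
      intro p; rw [he]; omega
    have hemod : ∀ p : Fin m × Fin 2, ((e p : Fin n) : ℕ) % 2 = (p.2 : ℕ) := by
      intro p; rw [he]; have := p.2.isLt; omega
    have hi2 : (i:ℕ)/2 < m := by have := i.isLt; omega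
    have hj2 : (j:ℕ)/2 < m := by have := j.isLt; omega
    have hmul : (H * H.transpose) i j =
        (if (i:ℕ)/2 = (j:ℕ)/2 then (m:ℤ) else (m:ℤ) - 4) *
        (if (i:ℕ)%2 = (j:ℕ)%2 then 2 else 0) := by
      rw [Matrix.mul_apply]
      simp only [Matrix.transpose_apply]
      rw [← Equiv.sum_comp e (fun c => H i c * H j c)]
      rw [Fintype.sum_prod_type]
      have term : ∀ (a : Fin m) (d : Fin 2),
          H i (e (a, d)) * H j (e (a, d)) =
          ((if (i:ℕ)/2 = (a:ℕ) then (-1:ℤ) else 1) * (if (j:ℕ)/2 = (a:ℕ) then -1 else 1)) *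
          ((if (i:ℕ)%2 = 1 ∧ (d:ℕ) = 1 then (-1:ℤ) else 1) *
            (if (j:ℕ)%2 = 1 ∧ (d:ℕ) = 1 then -1 else 1)) := by
        intro a d
        simp only [hH]
        rw [hediv (a, d), hemod (a, d)]
        ring
      rw [Finset.sum_congr rfl (fun a _ => Finset.sum_congr rfl (fun d _ => term a d))]
      rw [← Finset.sum_mul_sum]
      rw [sumA' _ _ hi2 hj2, sumF _ _ (Nat.mod_lt _ (by norm_num)) (Nat.mod_lt _ (by norm_num))]
    rw [hmul]
    by_cases hij : i = j
    · subst hij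
      simp only [if_pos rfl, if_true]
      omega
    · rw [if_neg hij]
      by_cases hp : (i:ℕ)%2 = (j:ℕ)%2
      · have hd : (i:ℕ)/2 ≠ (j:ℕ)/2 := by
          intro hdd
          apply hij
          apply Fin.ext
          omega
        rw [if_pos hp, if_neg hd]
        have : ((m:ℤ) - 4) * 2 - (n:ℤ) * 0 = 12 * k := by
          rw [hm, hk]; push_cast; ring
        rw [this]
        exact Dvd.intro _ rfl
      · rw [if_neg hp]
        simp
end
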